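/- arXiv:1912.13454 — 9 statements merged into one kernel-verified Lean document; each statement's English description precedes it below -/
import Mathlib

section
/- For any positive constants C₁, C₂, C₃ there exist positive constants γ > 0, δ > 0 and a natural number N₀ such that the following holds for all natural numbers n > N₀. Let ρ be a real number with ρ > 1/n, and let φ : {1,…,n} → (0,∞) satisfy Σ_{k=1}^{n} φ(k) < C₁·n·ρ. Let (Ω, ℱ, P) be a probability space and V₁,…,V_n events such that C₂^{−1}·ρ ≤ P(V_l) < C₂·ρ for every l ∈ {1,…,n}, and P(V_k ∩ V_j) < C₃·ρ·φ(|k−j|) for all k ≠ j. Then P({ω ∈ Ω : Σ_{l=1}^{n} 1_{V_l}(ω) > γ·n·ρ}) > δ. -/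
open MeasureTheory

set_option maxHeartbeats 1000000 in
/-- occurrence of rare hierarchically independent events
(Paley–Zygmund type second-moment argument). -/
theorem stmt_1 (C₁ C₂ C₃ : ℝ) (hC₁ : 0 < C₁) (hC₂ : 0 < C₂) (hC₃ : 0 < C₃) :
    ∃ γ δ : ℝ, ∃ N₀ : ℕ, 0 < γ ∧ 0 < δ ∧
      ∀ n : ℕ, N₀ < n →
      ∀ ρ : ℝ, 1 / (n : ℝ) < ρ →
      ∀ φ : ℕ → ℝ, (∀ k ∈ Finset.Icc 1 n, 0 < φ k) →
        (∑ k ∈ Finset.Icc 1 n, φ k) < C₁ * n * ρ →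
      ∀ (Ω : Type) (_ : MeasurableSpace Ω) (μ : Measure Ω), IsProbabilityMeasure μ →
      ∀ V : Fin n → Set Ω, (∀ l, MeasurableSet (V l)) →
        (∀ l, C₂⁻¹ * ρ ≤ (μ (V l)).toReal ∧ (μ (V l)).toReal < C₂ * ρ) →
        (∀ k j : Fin n, k ≠ j →
          (μ (V k ∩ V j)).toReal < C₃ * ρ * φ (((k : ℤ) - (j : ℤ)).natAbs)) →
        δ < (μ {ω | γ * n * ρ < ∑ l, (V l).indicator (fun _ => (1 : ℝ)) ω}).toReal := by
  have hBpos : 0 < C₂ + 2 * C₁ * C₃ := by positivity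
  set B := C₂ + 2 * C₁ * C₃ with hBdef
  refine ⟨C₂⁻¹ / 4, 1 / (4 * B * C₂ ^ 2), 0, by positivity, by positivity, ?_⟩
  intro n hn ρ hρ φ hφpos hφsum Ω mΩ μ hμ V hVmeas hVbd hVpair
  have hn1 : (1 : ℝ) ≤ (n : ℝ) := by exact_mod_cast hn
  have hnpos : (0 : ℝ) < n := by linarith
  have hρpos : 0 < ρ := lt_trans (by positivity) hρ
  have hnρ : 1 < (n : ℝ) * ρ := by
    rw [div_lt_iff₀ hnpos] at hρ; linarith [hρ]
  have hnρpos : 0 < (n : ℝ) * ρ := by positivity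
  -- the random variable X
  set X : Ω → ℝ := fun ω => ∑ l, (V l).indicator (fun _ => (1 : ℝ)) ω with hX
  have hXint : Integrable X μ :=
    integrable_finset_sum _ fun l _ => (integrable_const (1 : ℝ)).indicator (hVmeas l)
  have hXmeas : Measurable X :=
    Finset.measurable_sum _ fun l _ => measurable_const.indicator (hVmeas l)
  -- first moment
  set S : ℝ := ∑ l, (μ (V l)).toReal with hSdef
  have hEX : ∫ ω, X ω ∂μ = S := by
    rw [hX, integral_finset_sum _ fun l _ => (integrable_const (1 : ℝ)).indicator (hVmeas l)]
    refine Finset.sum_congr rfl fun l _ => ?_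
    rw [integral_indicator_const (1 : ℝ) (hVmeas l)]; simp [Measure.real]
  -- second moment
  have hXsq : ∀ ω, X ω ^ 2 = ∑ k, ∑ j, (V k ∩ V j).indicator (fun _ => (1 : ℝ)) ω := by
    intro ω
    rw [hX, sq, Finset.sum_mul_sum]
    refine Finset.sum_congr rfl fun k _ => Finset.sum_congr rfl fun j _ => ?_
    rw [← Set.inter_indicator_mul]; simp
  set T : ℝ := ∑ k, ∑ j, (μ (V k ∩ V j)).toReal with hTdef
  have hX2int : Integrable (fun ω => X ω ^ 2) μ := by
    simp only [hXsq]
    exact integrable_finset_sum _ fun k _ => integrable_finset_sum _ fun j _ =>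
      (integrable_const (1 : ℝ)).indicator ((hVmeas k).inter (hVmeas j))
  have hEX2 : ∫ ω, X ω ^ 2 ∂μ = T := by
    simp only [hXsq]
    rw [integral_finset_sum _ fun k _ => integrable_finset_sum _ fun j _ =>
      (integrable_const (1 : ℝ)).indicator ((hVmeas k).inter (hVmeas j))]
    refine Finset.sum_congr rfl fun k _ => ?_
    rw [integral_finset_sum _ fun j _ =>
      (integrable_const (1 : ℝ)).indicator ((hVmeas k).inter (hVmeas j))]
    refine Finset.sum_congr rfl fun j _ => ?_
    rw [integral_indicator_const (1 : ℝ) ((hVmeas k).inter (hVmeas j))]; simp [Measure.real]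
  -- bounds on S
  have hSlb : C₂⁻¹ * ((n : ℝ) * ρ) ≤ S := by
    have := Finset.card_nsmul_le_sum Finset.univ (fun l => (μ (V l)).toReal) (C₂⁻¹ * ρ)
      (fun l _ => (hVbd l).1)
    simp only [Finset.card_univ, Fintype.card_fin, nsmul_eq_mul] at this
    rw [hSdef]; nlinarith [this]
  -- bound on T
  have hφnonneg : ∀ d ∈ Finset.Icc 1 n, 0 ≤ φ d := fun d hd => (hφpos d hd).le
  have hkey : ∀ k : Fin n, ∀ s : Finset (Fin n),
      (∀ j ∈ s, j ≠ k) → (Set.InjOn (fun j : Fin n => ((k : ℤ) - (j : ℤ)).natAbs) s) →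
      ∑ j ∈ s, φ (((k : ℤ) - (j : ℤ)).natAbs) ≤ ∑ d ∈ Finset.Icc 1 n, φ d := by
    intro k s hne hinj
    rw [← Finset.sum_image (fun x hx y hy h =>
      hinj (Finset.mem_coe.mpr hx) (Finset.mem_coe.mpr hy) h)]
    refine Finset.sum_le_sum_of_subset_of_nonneg ?_ (fun d hd _ => hφnonneg d hd)
    intro d hd
    simp only [Finset.mem_image] at hd
    obtain ⟨j, hj, rfl⟩ := hd
    have h1 : (j : ℕ) ≠ (k : ℕ) := fun h => hne j hj (Fin.ext h)
    have h2 : (j : ℕ) < n := j.isLt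
    have h3 : (k : ℕ) < n := k.isLt
    simp only [Finset.mem_Icc]
    omega
  have hoffdiag : ∀ k : Fin n, ∑ j ∈ Finset.univ.erase k, (μ (V k ∩ V j)).toReal ≤
      C₃ * ρ * (2 * ∑ d ∈ Finset.Icc 1 n, φ d) := by
    intro k
    have step1 : ∑ j ∈ Finset.univ.erase k, (μ (V k ∩ V j)).toReal ≤
        ∑ j ∈ Finset.univ.erase k, C₃ * ρ * φ (((k : ℤ) - (j : ℤ)).natAbs) := by
      refine Finset.sum_le_sum fun j hj => ?_
      exact (hVpair k j (Ne.symm (Finset.mem_erase.1 hj).1)).le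
    have step2 : ∑ j ∈ Finset.univ.erase k, φ (((k : ℤ) - (j : ℤ)).natAbs) ≤
        2 * ∑ d ∈ Finset.Icc 1 n, φ d := by
      rw [← Finset.sum_filter_add_sum_filter_not (Finset.univ.erase k) (fun j => j < k)]
      have b1 : ∑ j ∈ (Finset.univ.erase k).filter (fun j => j < k),
          φ (((k : ℤ) - (j : ℤ)).natAbs) ≤ ∑ d ∈ Finset.Icc 1 n, φ d := by
        refine hkey k _ (fun j hj => (Finset.mem_erase.1 (Finset.mem_filter.1 hj).1).1) ?_
        intro x hx y hy hxy
        have hx' := (Finset.mem_filter.1 hx).2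
        have hy' := (Finset.mem_filter.1 hy).2
        simp only at hxy
        have hx'' : (x : ℕ) < (k : ℕ) := hx'
        have hy'' : (y : ℕ) < (k : ℕ) := hy'
        exact Fin.ext (by omega)
      have b2 : ∑ j ∈ (Finset.univ.erase k).filter (fun j => ¬ j < k),
          φ (((k : ℤ) - (j : ℤ)).natAbs) ≤ ∑ d ∈ Finset.Icc 1 n, φ d := by
        refine hkey k _ (fun j hj => (Finset.mem_erase.1 (Finset.mem_filter.1 hj).1).1) ?_
        intro x hx y hy hxy
        have hx' := (Finset.mem_filter.1 hx).2
        have hy' := (Finset.mem_filter.1 hy).2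
        simp only [not_lt] at hx' hy'
        have hx'' : (k : ℕ) ≤ (x : ℕ) := hx'
        have hy'' : (k : ℕ) ≤ (y : ℕ) := hy'
        simp only at hxy
        exact Fin.ext (by omega)
      linarith
    calc ∑ j ∈ Finset.univ.erase k, (μ (V k ∩ V j)).toReal
        ≤ ∑ j ∈ Finset.univ.erase k, C₃ * ρ * φ (((k : ℤ) - (j : ℤ)).natAbs) := step1
      _ = C₃ * ρ * ∑ j ∈ Finset.univ.erase k, φ (((k : ℤ) - (j : ℤ)).natAbs) := by
          rw [Finset.mul_sum]
      _ ≤ C₃ * ρ * (2 * ∑ d ∈ Finset.Icc 1 n, φ d) := by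
          have : 0 < C₃ * ρ := by positivity
          nlinarith [step2]
  have hTub : T ≤ B * ((n : ℝ) * ρ) ^ 2 := by
    have hTsplit : T = ∑ k, ((μ (V k ∩ V k)).toReal +
        ∑ j ∈ Finset.univ.erase k, (μ (V k ∩ V j)).toReal) := by
      refine Finset.sum_congr rfl fun k _ => ?_
      exact (Finset.add_sum_erase _ (fun j => (μ (V k ∩ V j)).toReal) (Finset.mem_univ k)).symm
    have hdiag : ∀ k : Fin n, (μ (V k ∩ V k)).toReal ≤ C₂ * ρ := by
      intro k; rw [Set.inter_self]; exact (hVbd k).2.le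
    have hsum : T ≤ (n : ℝ) * (C₂ * ρ) + (n : ℝ) * (C₃ * ρ * (2 * ∑ d ∈ Finset.Icc 1 n, φ d)) := by
      rw [hTsplit]
      have := Finset.sum_le_sum (s := (Finset.univ : Finset (Fin n)))
        (f := fun k => (μ (V k ∩ V k)).toReal + ∑ j ∈ Finset.univ.erase k, (μ (V k ∩ V j)).toReal)
        (g := fun _ => C₂ * ρ + C₃ * ρ * (2 * ∑ d ∈ Finset.Icc 1 n, φ d))
        (fun k _ => add_le_add (hdiag k) (hoffdiag k))
      simpa [Finset.sum_const, Finset.card_univ, nsmul_eq_mul, mul_add] using this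
    have hφ2 : ∑ d ∈ Finset.Icc 1 n, φ d ≤ C₁ * n * ρ := hφsum.le
    have h1 : (n : ℝ) * (C₂ * ρ) ≤ C₂ * ((n : ℝ) * ρ) ^ 2 := by
      have h := mul_le_mul_of_nonneg_left hnρ.le
        (show (0 : ℝ) ≤ C₂ * ((n : ℝ) * ρ) by positivity)
      nlinarith [h]
    have h2 : (n : ℝ) * (C₃ * ρ * (2 * ∑ d ∈ Finset.Icc 1 n, φ d)) ≤
        2 * C₁ * C₃ * ((n : ℝ) * ρ) ^ 2 := by
      have h := mul_le_mul_of_nonneg_left hφ2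
        (show (0 : ℝ) ≤ 2 * C₃ * ρ * (n : ℝ) by positivity)
      nlinarith [h]
    rw [hBdef]; nlinarith [hsum, h1, h2]
  -- the event A
  set t : ℝ := C₂⁻¹ / 4 * n * ρ with htdef
  have htnonneg : 0 ≤ t := by positivity
  set A : Set Ω := {ω | t < X ω} with hAdef
  have hAmeas : MeasurableSet A := measurableSet_lt measurable_const hXmeas
  set a : ℝ := (μ A).toReal with hadef
  have hanonneg : 0 ≤ a := ENNReal.toReal_nonneg
  -- split the integral
  have hsplit : S = (∫ ω in A, X ω ∂μ) + ∫ ω in Aᶜ, X ω ∂μ := by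
    rw [← hEX, integral_add_compl hAmeas hXint]
  -- bound on complement
  have hcompl : ∫ ω in Aᶜ, X ω ∂μ ≤ t := by
    have h1 : ∫ ω in Aᶜ, X ω ∂μ ≤ ∫ _ω in Aᶜ, t ∂μ := by
      refine setIntegral_mono_on hXint.integrableOn
        (integrableOn_const (measure_lt_top μ _).ne) hAmeas.compl ?_
      intro ω hω
      simp only [hAdef, Set.mem_compl_iff, Set.mem_setOf_eq, not_lt] at hω
      exact hω
    have h2 : ∫ _ω in Aᶜ, t ∂μ = (μ Aᶜ).toReal * t := by
      rw [setIntegral_const, smul_eq_mul]; rfl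
    have h3 : (μ Aᶜ).toReal ≤ 1 := by
      have := ENNReal.toReal_mono ENNReal.one_ne_top (prob_le_one (μ := μ) (s := Aᶜ))
      simpa using this
    calc ∫ ω in Aᶜ, X ω ∂μ ≤ (μ Aᶜ).toReal * t := by rw [← h2]; exact h1
      _ ≤ 1 * t := mul_le_mul_of_nonneg_right h3 htnonneg
      _ = t := one_mul t
  -- bound on A via AM-GM
  set lam : ℝ := 4 * B * C₂ * ((n : ℝ) * ρ) with hlamdef
  have hlampos : 0 < lam := by positivity
  have hAbound : ∫ ω in A, X ω ∂μ ≤ lam / 2 * a + T / (2 * lam) := by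
    have hg : Integrable (fun ω => lam / 2 + X ω ^ 2 / (2 * lam)) μ :=
      (integrable_const _).add (hX2int.div_const _)
    have h1 : ∫ ω in A, X ω ∂μ ≤ ∫ ω in A, (lam / 2 + X ω ^ 2 / (2 * lam)) ∂μ := by
      refine setIntegral_mono_on hXint.integrableOn hg.integrableOn hAmeas ?_
      intro ω _
      have h2l : (0 : ℝ) < 2 * lam := by positivity
      have hkey : X ω * (2 * lam) ≤ (lam / 2 + X ω ^ 2 / (2 * lam)) * (2 * lam) := by
        have heq : (lam / 2 + X ω ^ 2 / (2 * lam)) * (2 * lam) = lam * lam + X ω ^ 2 := by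
          field_simp
        rw [heq]
        nlinarith [sq_nonneg (X ω - lam)]
      exact le_of_mul_le_mul_right hkey h2l
    have h2 : ∫ ω in A, (lam / 2 + X ω ^ 2 / (2 * lam)) ∂μ =
        (μ A).toReal * (lam / 2) + (∫ ω in A, X ω ^ 2 ∂μ) / (2 * lam) := by
      rw [integral_add (integrable_const _).integrableOn (hX2int.div_const _).integrableOn,
        setIntegral_const, smul_eq_mul, integral_div]; rfl
    have h3 : ∫ ω in A, X ω ^ 2 ∂μ ≤ T := by
      rw [← hEX2]
      exact setIntegral_le_integral hX2int (Filter.Eventually.of_forall fun ω => sq_nonneg _)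
    calc ∫ ω in A, X ω ∂μ ≤ (μ A).toReal * (lam / 2) + (∫ ω in A, X ω ^ 2 ∂μ) / (2 * lam) := by
          rw [← h2]; exact h1
      _ ≤ lam / 2 * a + T / (2 * lam) := by
          have h4 : (∫ ω in A, X ω ^ 2 ∂μ) / (2 * lam) ≤ T / (2 * lam) := by
            gcongr
          have h5 : (μ A).toReal * (lam / 2) = lam / 2 * a := by rw [hadef]; ring
          linarith [h4, h5]
  -- final numeric argument
  have hTdiv : T / (2 * lam) ≤ C₂⁻¹ / 8 * ((n : ℝ) * ρ) := by
    have h1 : T / (2 * lam) ≤ B * ((n : ℝ) * ρ) ^ 2 / (2 * lam) := by gcongr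
    have h2 : B * ((n : ℝ) * ρ) ^ 2 / (2 * lam) = C₂⁻¹ / 8 * ((n : ℝ) * ρ) := by
      rw [hlamdef]
      have hBne : B ≠ 0 := hBpos.ne'
      have hC₂ne : C₂ ≠ 0 := hC₂.ne'
      have hnne : (n : ℝ) ≠ 0 := hnpos.ne'
      have hρne : ρ ≠ 0 := hρpos.ne'
      field_simp
      ring
    linarith [h1, h2]
  have ht' : t = C₂⁻¹ / 4 * ((n : ℝ) * ρ) := by rw [htdef]; ring
  have hl' : lam / 2 * a = 2 * B * C₂ * ((n : ℝ) * ρ) * a := by rw [hlamdef]; ring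
  have hmain : C₂⁻¹ * ((n : ℝ) * ρ) ≤ C₂⁻¹ / 4 * ((n : ℝ) * ρ) +
      2 * B * C₂ * ((n : ℝ) * ρ) * a + C₂⁻¹ / 8 * ((n : ℝ) * ρ) := by
    linarith [hSlb, hsplit, hcompl, hAbound, hTdiv, ht', hl']
  have hcomm : 2 * B * C₂ * ((n : ℝ) * ρ) * a = 2 * B * C₂ * a * ((n : ℝ) * ρ) := by ring
  have h' : 5 / 8 * C₂⁻¹ * ((n : ℝ) * ρ) ≤ 2 * B * C₂ * a * ((n : ℝ) * ρ) := by
    linarith [hmain, hcomm]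
  have hstep2 : 5 / 8 * C₂⁻¹ ≤ 2 * B * C₂ * a := le_of_mul_le_mul_right h' hnρpos
  show 1 / (4 * B * C₂ ^ 2) < a
  have hpos2 : (0 : ℝ) < 2 * B * C₂ := by positivity
  have h10 : 5 / 8 * C₂⁻¹ / (2 * B * C₂) ≤ a := by
    rw [div_le_iff₀ hpos2]
    have : a * (2 * B * C₂) = 2 * B * C₂ * a := by ring
    linarith [hstep2, this]
  have heq : 5 / 8 * C₂⁻¹ / (2 * B * C₂) = 5 / (16 * B * C₂ ^ 2) := by
    have hBne : B ≠ 0 := hBpos.ne'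
    have hC₂ne : C₂ ≠ 0 := hC₂.ne'
    field_simp
    ring
  have hx : (0 : ℝ) < B * C₂ ^ 2 := by positivity
  have h11 : 1 / (4 * B * C₂ ^ 2) < 5 / (16 * B * C₂ ^ 2) := by
    rw [div_lt_div_iff₀ (by positivity) (by positivity)]
    nlinarith [hx]
  linarith [h10, heq, h11]
end

section
/- For every integer m ≥ 3 and every real A₀ > 1 there exists a constant C > 0 such that for every real A ∈ [1, A₀], every integer T ≥ 2, every real d with T ≤ d ≤ 2T, and every l ∈ {1,…,m−1}, the following two estimates hold: (i) |2·∫_{T^{−l/m}}^{T^{(1−l)/m}} λ·|a_{d,A}(λ) − λ^{−1}|² dλ − (2/m)·log T| ≤ C; (ii) |∫_{T^{−l/m}}^{T^{(1−l)/m}} (λ·a_{d,A}(λ) − 1)·λ^{−1} dλ| ≤ C. -/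
open MeasureTheory

/-- `a_{d,A}(λ) = (1 − (e^{iλ}−1)·e^{iλd}/(iλ))·e^{−Aλ}/λ`, the positive-frequency part of the
Fourier transform of `f^{d,A}`. -/
noncomputable def aFn (d A x : ℝ) : ℂ :=
  (1 - (Complex.exp (Complex.I * x) - 1) * Complex.exp (Complex.I * x * d) / (Complex.I * x)) *
    Complex.exp (-(A : ℂ) * x) / (x : ℂ)

noncomputable def Complex.abs : AbsoluteValue ℂ ℝ where
  toFun z := ‖z‖
  map_mul' := norm_mul
  nonneg' := norm_nonneg
  eq_zero' _ := norm_eq_zero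
  add_le' := norm_add_le

lemma Complex.norm_eq_abs (z : ℂ) : ‖z‖ = Complex.abs z := rfl

lemma Complex.abs_exp (z : ℂ) : Complex.abs (Complex.exp z) = Real.exp z.re := Complex.norm_exp z

lemma Complex.abs_I : Complex.abs Complex.I = 1 := Complex.norm_I

lemma Complex.abs_ofReal (r : ℝ) : Complex.abs (r : ℂ) = |r| := Complex.norm_real r

lemma Complex.abs_two : Complex.abs 2 = 2 := Complex.norm_two

lemma Complex.sq_abs (z : ℂ) : Complex.abs z ^ 2 = Complex.normSq z := Complex.sq_norm z

lemma Complex.continuous_abs : Continuous Complex.abs := continuous_norm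

open Complex intervalIntegral


noncomputable def gFn (d A x : ℝ) : ℂ :=
  (Complex.exp (-(A:ℂ)*x) - 1) -
    (Complex.exp (Complex.I*x) - 1) * Complex.exp (Complex.I*x*d) * Complex.exp (-(A:ℂ)*x)
      / (Complex.I*x)

lemma mul_aFn {x : ℝ} (d A : ℝ) (hx : x ≠ 0) : (x:ℂ) * aFn d A x - 1 = gFn d A x := by
  have hx' : (x:ℂ) ≠ 0 := Complex.ofReal_ne_zero.2 hx
  unfold aFn gFn
  field_simp [Complex.I_ne_zero]
  ring

lemma aFn_sub {x : ℝ} (d A : ℝ) (hx : x ≠ 0) : aFn d A x - (x:ℂ)⁻¹ = gFn d A x / x := by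
  have hx' : (x:ℂ) ≠ 0 := Complex.ofReal_ne_zero.2 hx
  rw [← mul_aFn d A hx]
  field_simp

lemma abs_eA {A x : ℝ} : Complex.abs (Complex.exp (-(A:ℂ)*x)) = Real.exp (-(A*x)) := by
  rw [Complex.abs_exp]; norm_num

lemma abs_eA_le {A x : ℝ} (h : 0 ≤ A * x) : Complex.abs (Complex.exp (-(A:ℂ)*x)) ≤ 1 := by
  rw [abs_eA, Real.exp_le_one_iff]; linarith

lemma abs_eA_sub {A x : ℝ} (h : 0 ≤ A * x) :
    Complex.abs (Complex.exp (-(A:ℂ)*x) - 1) ≤ A * x := by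
  have : (-(A:ℂ)*x) = ((-(A*x) : ℝ) : ℂ) := by push_cast; ring
  rw [this, ← Complex.ofReal_exp, ← Complex.ofReal_one, ← Complex.ofReal_sub,
    Complex.abs_ofReal]
  have h1 : Real.exp (-(A*x)) ≤ 1 := by rw [Real.exp_le_one_iff]; linarith
  have h2 : 1 - (A*x) ≤ Real.exp (-(A*x)) := by
    have := Real.add_one_le_exp (-(A*x)); linarith
  rw [abs_le]; constructor <;> linarith

lemma abs_eD {d x : ℝ} : Complex.abs (Complex.exp (Complex.I*x*d)) = 1 := by
  rw [Complex.abs_exp]; norm_num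

lemma one_sub_exp_le {y : ℝ} (h : 0 ≤ y) : 1 - Real.exp (-y) ≤ y := by
  have := Real.add_one_le_exp (-y); linarith

lemma e_sq (x : ℝ) : Complex.abs (Complex.exp (Complex.I * x) - 1) ^ 2 = 2 - 2 * Real.cos x := by
  rw [Complex.sq_abs]
  have : Complex.I * x = (x:ℂ) * Complex.I := by ring
  rw [this, Complex.exp_mul_I, ← Complex.ofReal_cos, ← Complex.ofReal_sin]
  simp [Complex.normSq_apply, Complex.cos_ofReal_re, Complex.sin_ofReal_re]
  nlinarith [Real.sin_sq_add_cos_sq x]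

lemma e_close {x : ℝ} (h0 : 0 < x) (h1 : x ≤ 1) :
    |Complex.abs (Complex.exp (Complex.I * x) - 1) - x| ≤ x ^ 3 := by
  have hsq := e_sq x
  have hc := Real.cos_bound (by rw [abs_of_pos h0]; exact h1)
  rw [abs_of_pos h0] at hc
  set e := Complex.abs (Complex.exp (Complex.I * x) - 1) with he
  have he0 : 0 ≤ e := Complex.abs.nonneg _
  have h2 : |e ^ 2 - x ^ 2| ≤ x ^ 4 := by
    rw [hsq]
    rw [abs_le] at hc ⊢
    constructor <;> nlinarith [pow_le_one₀ h0.le h1 (n := 4)]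
  rw [abs_le] at h2 ⊢
  constructor <;> nlinarith [sq_nonneg (e - x), sq_nonneg (e + x), pow_le_one₀ h0.le h1 (n:=2)]

lemma abs_G {d A x : ℝ} (h0 : 0 < x) :
    Complex.abs ((Complex.exp (Complex.I*x) - 1) * Complex.exp (Complex.I*x*d) *
      Complex.exp (-(A:ℂ)*x) / (Complex.I*x))
      = Complex.abs (Complex.exp (Complex.I*x) - 1) * Real.exp (-(A*x)) / x := by
  rw [map_div₀, map_mul, map_mul, map_mul, abs_eD, abs_eA, Complex.abs_I, Complex.abs_ofReal,
    abs_of_pos h0]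
  ring

lemma abs_gFn_sub_one {d A x : ℝ} (hA : 0 ≤ A) (h0 : 0 < x) (h1 : x ≤ 1) :
    |Complex.abs (gFn d A x) - 1| ≤ (3*A+1)*x := by
  have hAx : 0 ≤ A * x := by positivity
  have hclose : |Complex.abs (Complex.exp (Complex.I*x) - 1) - x| ≤ x^3 := e_close h0 h1
  set E := Complex.abs (Complex.exp (Complex.I*x) - 1) with hE
  have hE0 : 0 ≤ E := Complex.abs.nonneg _
  have hx3 : x^3 ≤ x := by nlinarith [mul_pos h0 h0, sq_nonneg (1-x)]
  have hEle : E ≤ 2*x := by nlinarith [abs_le.1 hclose]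
  have hG := abs_G (d:=d) (A:=A) h0
  set G := (Complex.exp (Complex.I*x) - 1) * Complex.exp (Complex.I*x*d) *
      Complex.exp (-(A:ℂ)*x) / (Complex.I*x) with hGdef
  have h2 : |Complex.abs (gFn d A x) - Complex.abs G| ≤ A * x := by
    have habv := Complex.abs.abs_abv_sub_le_abv_sub (gFn d A x) (-G)
    have hsub : gFn d A x - -G = Complex.exp (-(A:ℂ)*x) - 1 := by rw [gFn, hGdef]; ring
    rw [hsub, Complex.abs.map_neg] at habv
    exact habv.trans (abs_eA_sub hAx)
  have hexp1 : Real.exp (-(A*x)) ≤ 1 := by rw [Real.exp_le_one_iff]; linarith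
  have hexp2 : 1 - A*x ≤ Real.exp (-(A*x)) := by have := Real.add_one_le_exp (-(A*x)); linarith
  have h3 : |Complex.abs G - 1| ≤ (2*A+1)*x := by
    rw [hG]
    have heq : E * Real.exp (-(A*x)) / x - 1 = (E * Real.exp (-(A*x)) - x)/x := by
      field_simp
    rw [heq, abs_div, abs_of_pos h0, div_le_iff₀ h0]
    have h4 : |E * (1 - Real.exp (-(A*x)))| ≤ 2*A*x^2 := by
      rw [abs_mul, _root_.abs_of_nonneg hE0, _root_.abs_of_nonneg (by linarith : (0:ℝ) ≤ 1 - Real.exp (-(A*x)))]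
      nlinarith
    have h5 : E * Real.exp (-(A*x)) - x = (E - x) - E * (1 - Real.exp (-(A*x))) := by ring
    rw [h5]
    calc |(E - x) - E * (1 - Real.exp (-(A*x)))|
        ≤ |E - x| + |E * (1 - Real.exp (-(A*x)))| := abs_sub _ _
      _ ≤ x^3 + 2*A*x^2 := add_le_add hclose h4
      _ ≤ (2*A+1)*x*x := by nlinarith
  calc |Complex.abs (gFn d A x) - 1|
      ≤ |Complex.abs (gFn d A x) - Complex.abs G| + |Complex.abs G - 1| := abs_sub_le _ _ _
    _ ≤ A*x + (2*A+1)*x := add_le_add h2 h3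
    _ = (3*A+1)*x := by ring

lemma key_R {d A x : ℝ} (hA : 0 ≤ A) (h0 : 0 < x) (h1 : x ≤ 1) :
    |x * Complex.abs (aFn d A x - (x:ℂ)⁻¹)^2 - x⁻¹| ≤ (3*A+1)*(3*A+3) := by
  have hg := abs_gFn_sub_one (d:=d) hA h0 h1
  have heq : x * Complex.abs (aFn d A x - (x:ℂ)⁻¹)^2 - x⁻¹
      = (Complex.abs (gFn d A x)^2 - 1)/x := by
    rw [aFn_sub d A h0.ne', map_div₀, Complex.abs_ofReal, abs_of_pos h0]
    field_simp
  rw [heq, abs_div, abs_of_pos h0, div_le_iff₀ h0]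
  have hq0 : 0 ≤ Complex.abs (gFn d A x) := Complex.abs.nonneg _
  set gq := Complex.abs (gFn d A x)
  obtain ⟨hgl, hgu⟩ := abs_le.1 hg
  rw [abs_le]
  constructor <;> nlinarith [sq_nonneg gq, sq_nonneg (gq - 1), sq_nonneg (gq + 1), mul_pos h0 h0]

noncomputable def psi (A x : ℝ) : ℂ :=
  -((Complex.exp (Complex.I*x) - 1) * Complex.exp (-(A:ℂ)*x) / (Complex.I * x^2))

noncomputable def psi' (A x : ℝ) : ℂ :=
  -(((Complex.I * Complex.exp (Complex.I*x) * Complex.exp (-(A:ℂ)*x) +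
      (Complex.exp (Complex.I*x) - 1) * (Complex.exp (-(A:ℂ)*x) * -(A:ℂ))) * (Complex.I * x^2) -
      (Complex.exp (Complex.I*x) - 1) * Complex.exp (-(A:ℂ)*x) * (Complex.I * (2*x))) /
      (Complex.I * x^2)^2)

lemma abs_sub_le' (p q : ℂ) : Complex.abs (p - q) ≤ Complex.abs p + Complex.abs q := by
  simpa [sub_eq_add_neg] using Complex.abs.add_le p (-q)

lemma D_ne {x : ℝ} (hx : x ≠ 0) : Complex.I * (x:ℂ)^2 ≠ 0 :=
  mul_ne_zero Complex.I_ne_zero (pow_ne_zero 2 (Complex.ofReal_ne_zero.2 hx))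

lemma hasDeriv_psi {A x : ℝ} (hx : x ≠ 0) : HasDerivAt (psi A) (psi' A x) x := by
  have hid : HasDerivAt (fun y : ℝ => (y:ℂ)) 1 x := by simpa using (hasDerivAt_id x).ofReal_comp
  have hE : HasDerivAt (fun y:ℝ => Complex.exp (Complex.I*y))
      (Complex.I * Complex.exp (Complex.I*x)) x := by
    have := (hid.const_mul Complex.I).cexp
    simpa [mul_comm] using this
  have hA : HasDerivAt (fun y:ℝ => Complex.exp (-(A:ℂ)*y))
      (Complex.exp (-(A:ℂ)*x) * -(A:ℂ)) x := by
    simpa using (hid.const_mul (-(A:ℂ))).cexp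
  have hN : HasDerivAt (fun y:ℝ => (Complex.exp (Complex.I*y) - 1) * Complex.exp (-(A:ℂ)*y))
      (Complex.I * Complex.exp (Complex.I*x) * Complex.exp (-(A:ℂ)*x) +
        (Complex.exp (Complex.I*x) - 1) * (Complex.exp (-(A:ℂ)*x) * -(A:ℂ))) x :=
    (hE.sub_const 1).mul hA
  have hD : HasDerivAt (fun y:ℝ => Complex.I * (y:ℂ)^2) (Complex.I * (2*x)) x := by
    have h2 : (fun y:ℝ => Complex.I * (y:ℂ)^2) = fun y:ℝ => Complex.I * ((y:ℂ) * (y:ℂ)) := by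
      funext y; ring
    rw [h2]
    convert ((hid.mul hid).const_mul Complex.I) using 1
    · rfl
    · rfl
    push_cast
    ring
  have h3 := (hN.div hD (D_ne hx)).neg
  unfold psi psi'
  convert h3 using 2
  all_goals rfl

lemma contOn_psi' (A : ℝ) : ContinuousOn (psi' A) {x : ℝ | x ≠ 0} := by
  unfold psi'
  apply ContinuousOn.neg
  apply ContinuousOn.div (by fun_prop) (by fun_prop)
  intro x hx
  exact pow_ne_zero 2 (D_ne hx)

lemma abs_psi_le {A x : ℝ} (hA : 0 ≤ A) (h0 : 0 < x) (h1 : x ≤ 1) :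
    Complex.abs (psi A x) ≤ 2 / x := by
  have hAx : 0 ≤ A * x := by positivity
  have hclose : |Complex.abs (Complex.exp (Complex.I*x) - 1) - x| ≤ x^3 := e_close h0 h1
  have hx3 : x^3 ≤ x := by nlinarith [mul_pos h0 h0, sq_nonneg (1-x)]
  have hEle : Complex.abs (Complex.exp (Complex.I*x) - 1) ≤ 2*x := by
    nlinarith [abs_le.1 hclose]
  rw [psi, map_neg_eq_map, map_div₀, map_mul, map_mul, Complex.abs_I, map_pow,
    Complex.abs_ofReal, _root_.abs_of_pos h0, one_mul]
  have h2 : Complex.abs (Complex.exp (Complex.I*x) - 1) * Complex.abs (Complex.exp (-(A:ℂ)*x))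
      ≤ 2*x := by
    calc _ ≤ (2*x) * 1 := by
          apply mul_le_mul hEle (abs_eA_le hAx) (Complex.abs.nonneg _) (by positivity)
      _ = 2*x := by ring
  rw [div_le_div_iff₀ (by positivity) h0]
  nlinarith

lemma abs_psi'_le {A x : ℝ} (hA : 0 ≤ A) (h0 : 0 < x) (h1 : x ≤ 1) :
    Complex.abs (psi' A x) ≤ (2*A+5) / x^2 := by
  have hAx : 0 ≤ A * x := by positivity
  have hclose : |Complex.abs (Complex.exp (Complex.I*x) - 1) - x| ≤ x^3 := e_close h0 h1
  have hx3 : x^3 ≤ x := by nlinarith [mul_pos h0 h0, sq_nonneg (1-x)]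
  have hEle : Complex.abs (Complex.exp (Complex.I*x) - 1) ≤ 2*x := by
    nlinarith [abs_le.1 hclose]
  have heA : Complex.abs (Complex.exp (-(A:ℂ)*x)) ≤ 1 := abs_eA_le hAx
  have heE : Complex.abs (Complex.exp (Complex.I*x)) = 1 := by
    rw [Complex.abs_exp]; norm_num
  have habsD : Complex.abs (Complex.I*(x:ℂ)^2) = x^2 := by
    rw [map_mul, Complex.abs_I, map_pow, Complex.abs_ofReal, _root_.abs_of_pos h0, one_mul]
  have habsD' : Complex.abs (Complex.I*(2*(x:ℂ))) = 2*x := by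
    rw [map_mul, Complex.abs_I, map_mul, Complex.abs_two, Complex.abs_ofReal,
      _root_.abs_of_pos h0, one_mul]
  have habsN : Complex.abs ((Complex.exp (Complex.I*x) - 1) * Complex.exp (-(A:ℂ)*x)) ≤ 2*x := by
    rw [map_mul]
    calc _ ≤ (2*x) * 1 := mul_le_mul hEle heA (Complex.abs.nonneg _) (by positivity)
      _ = 2*x := by ring
  have habsN' : Complex.abs (Complex.I * Complex.exp (Complex.I*x) * Complex.exp (-(A:ℂ)*x) +
      (Complex.exp (Complex.I*x) - 1) * (Complex.exp (-(A:ℂ)*x) * -(A:ℂ))) ≤ 1 + 2*x*A := by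
    calc Complex.abs _ ≤ Complex.abs (Complex.I * Complex.exp (Complex.I*x) *
            Complex.exp (-(A:ℂ)*x)) +
          Complex.abs ((Complex.exp (Complex.I*x) - 1) * (Complex.exp (-(A:ℂ)*x) * -(A:ℂ))) :=
        Complex.abs.add_le _ _
      _ ≤ 1 + 2*x*A := by
        rw [map_mul, map_mul, Complex.abs_I, heE, map_mul, map_mul, map_neg_eq_map,
          Complex.abs_ofReal, _root_.abs_of_nonneg hA, one_mul, one_mul]
        have h5 : Complex.abs (Complex.exp (-(A:ℂ)*x)) * A ≤ 1 * A :=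
          mul_le_mul_of_nonneg_right heA hA
        have h6 : Complex.abs (Complex.exp (Complex.I*x) - 1) *
            (Complex.abs (Complex.exp (-(A:ℂ)*x)) * A) ≤ (2*x) * (1*A) := by
          apply mul_le_mul hEle (by linarith) (by positivity) (by positivity)
        nlinarith [Complex.abs.nonneg (Complex.exp (-(A:ℂ)*x))]
  have hnum : Complex.abs ((Complex.I * Complex.exp (Complex.I*x) * Complex.exp (-(A:ℂ)*x) +
      (Complex.exp (Complex.I*x) - 1) * (Complex.exp (-(A:ℂ)*x) * -(A:ℂ))) * (Complex.I * x^2) -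
      (Complex.exp (Complex.I*x) - 1) * Complex.exp (-(A:ℂ)*x) * (Complex.I * (2*x)))
      ≤ (2*A+5) * x^2 := by
    calc Complex.abs _ ≤ Complex.abs ((Complex.I * Complex.exp (Complex.I*x) *
            Complex.exp (-(A:ℂ)*x) + (Complex.exp (Complex.I*x) - 1) *
            (Complex.exp (-(A:ℂ)*x) * -(A:ℂ))) * (Complex.I * x^2)) +
          Complex.abs ((Complex.exp (Complex.I*x) - 1) * Complex.exp (-(A:ℂ)*x) *
            (Complex.I * (2*x))) := abs_sub_le' _ _
      _ ≤ (1 + 2*x*A) * x^2 + (2*x) * (2*x) := by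
        rw [map_mul, habsD, map_mul, habsD']
        apply add_le_add
        · exact mul_le_mul_of_nonneg_right habsN' (by positivity)
        · exact mul_le_mul_of_nonneg_right habsN (by positivity)
      _ ≤ (2*A+5) * x^2 := by nlinarith
  rw [psi', map_neg_eq_map, map_div₀, map_pow, habsD]
  rw [div_le_div_iff₀ (by positivity) (by positivity)]
  calc Complex.abs _ * x^2 ≤ ((2*A+5) * x^2) * x^2 :=
      mul_le_mul_of_nonneg_right hnum (by positivity)
    _ = (2*A+5) * (x^2)^2 := by ring

lemma ii_integrand {x : ℝ} (d A : ℝ) (hx : x ≠ 0) :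
    ((x:ℂ) * aFn d A x - 1) * (x:ℂ)⁻¹
      = (Complex.exp (-(A:ℂ)*x) - 1) / (x:ℂ) + psi A x * Complex.exp (Complex.I*x*d) := by
  have hx' : (x:ℂ) ≠ 0 := Complex.ofReal_ne_zero.2 hx
  rw [mul_aFn d A hx, gFn, psi]
  field_simp
  ring

lemma contOn_aFn (d A : ℝ) : ContinuousOn (fun x:ℝ => aFn d A x) {x:ℝ | x ≠ 0} := by
  unfold aFn
  apply ContinuousOn.div
  · apply ContinuousOn.mul _ (by fun_prop)
    apply ContinuousOn.sub continuousOn_const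
    apply ContinuousOn.div (by fun_prop) (by fun_prop)
    intro x hx
    exact mul_ne_zero Complex.I_ne_zero (Complex.ofReal_ne_zero.2 hx)
  · fun_prop
  · intro x hx; exact Complex.ofReal_ne_zero.2 hx

lemma contOn_f1 (d A : ℝ) :
    ContinuousOn (fun x:ℝ => x * Complex.abs (aFn d A x - (x:ℂ)⁻¹)^2) {x:ℝ | x ≠ 0} := by
  apply ContinuousOn.mul continuous_id.continuousOn
  apply ContinuousOn.pow
  apply Complex.continuous_abs.comp_continuousOn
  apply ContinuousOn.sub (contOn_aFn d A)
  exact ContinuousOn.inv₀ (by fun_prop) (fun x hx => Complex.ofReal_ne_zero.2 hx)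

lemma contOn_f2 (d A : ℝ) :
    ContinuousOn (fun x:ℝ => ((x:ℂ) * aFn d A x - 1) * (x:ℂ)⁻¹) {x:ℝ | x ≠ 0} := by
  apply ContinuousOn.mul
  · apply ContinuousOn.sub _ continuousOn_const
    exact ContinuousOn.mul (by fun_prop) (contOn_aFn d A)
  · exact ContinuousOn.inv₀ (by fun_prop) (fun x hx => Complex.ofReal_ne_zero.2 hx)

lemma contOn_h1 (A : ℝ) :
    ContinuousOn (fun x:ℝ => (Complex.exp (-(A:ℂ)*x) - 1) / (x:ℂ)) {x:ℝ | x ≠ 0} :=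
  ContinuousOn.div (by fun_prop) (by fun_prop) (fun x hx => Complex.ofReal_ne_zero.2 hx)

lemma contOn_psi (A : ℝ) : ContinuousOn (psi A) {x:ℝ | x ≠ 0} := by
  unfold psi
  apply ContinuousOn.neg
  exact ContinuousOn.div (by fun_prop) (by fun_prop) (fun x hx => D_ne hx)

set_option maxHeartbeats 1000000

/-- the squared `H_{1/2}` seminorm of the band-restricted function `f^{d,A,l}` equals
`(2/m)·log T` up to an additive constant, and its `H_{1/2}` inner product with `F^T` is bounded. -/
theorem stmt_2 (m : ℕ) (hm : 3 ≤ m) (A₀ : ℝ) (hA₀ : 1 < A₀) :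
    ∃ C : ℝ, 0 < C ∧
      ∀ A : ℝ, A ∈ Set.Icc 1 A₀ →
      ∀ T : ℕ, 2 ≤ T →
      ∀ d : ℝ, (T : ℝ) ≤ d → d ≤ 2 * T →
      ∀ l : ℕ, 1 ≤ l → l ≤ m - 1 →
        |2 * (∫ x in ((T : ℝ) ^ (-(l : ℝ) / (m : ℝ)))..((T : ℝ) ^ ((1 - (l : ℝ)) / (m : ℝ))),
              x * ‖(aFn d A x - (x : ℂ)⁻¹)‖ ^ 2) - (2 / (m : ℝ)) * Real.log T| ≤ C ∧
        ‖(∫ x in ((T : ℝ) ^ (-(l : ℝ) / (m : ℝ)))..((T : ℝ) ^ ((1 - (l : ℝ)) / (m : ℝ))),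
              ((x : ℂ) * aFn d A x - 1) * (x : ℂ)⁻¹)‖ ≤ C := by
  simp only [Complex.norm_eq_abs]
  refine ⟨2*((3*A₀+1)*(3*A₀+3)) + 3*A₀ + 9, by nlinarith, ?_⟩
  intro A hA T hT d hd1 hd2 l hl1 hl2
  obtain ⟨hA1, hA2⟩ := hA
  have hA0 : (0:ℝ) ≤ A := by linarith
  have hT1 : (1:ℝ) < T := by exact_mod_cast lt_of_lt_of_le one_lt_two hT
  have hT0 : (0:ℝ) < T := by linarith
  have hm0 : (0:ℝ) < m := by positivity
  have hl1' : (1:ℝ) ≤ l := by exact_mod_cast hl1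
  have hlm : (l:ℝ) + 1 ≤ m := by exact_mod_cast (by omega : l + 1 ≤ m)
  set a := (T:ℝ) ^ (-(l:ℝ) / (m:ℝ)) with ha_def
  set b := (T:ℝ) ^ ((1 - (l:ℝ)) / (m:ℝ)) with hb_def
  have ha0 : 0 < a := Real.rpow_pos_of_pos hT0 _
  have hb0 : 0 < b := Real.rpow_pos_of_pos hT0 _
  have hab : a ≤ b := by
    apply Real.rpow_le_rpow_of_exponent_le hT1.le
    gcongr
    linarith
  have hb1 : b ≤ 1 := by
    apply Real.rpow_le_one_of_one_le_of_nonpos hT1.le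
    apply div_nonpos_of_nonpos_of_nonneg <;> linarith
  have ha1 : a ≤ 1 := hab.trans hb1
  have hd0 : (0:ℝ) < d := lt_of_lt_of_le hT0 hd1
  have hda : 1 ≤ d * a := by
    have h1 : (T:ℝ) * a = (T:ℝ) ^ (1 + -(l:ℝ)/(m:ℝ)) := by
      rw [Real.rpow_add hT0, Real.rpow_one]
    have h2 : (1:ℝ) ≤ (T:ℝ) ^ (1 + -(l:ℝ)/(m:ℝ)) := by
      rw [show (1:ℝ) = (T:ℝ) ^ (0:ℝ) by simp]
      apply Real.rpow_le_rpow_of_exponent_le hT1.le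
      have h3 : (l:ℝ)/m ≤ 1 := by rw [div_le_one hm0]; linarith
      rw [neg_div]
      simp only [Real.rpow_zero]
      linarith
    have h4 : (T:ℝ) * a ≤ d * a := mul_le_mul_of_nonneg_right hd1 ha0.le
    linarith [h1 ▸ h2]
  have hdb : 1 ≤ d * b := le_trans hda (by nlinarith)
  have huIcc : Set.uIcc a b ⊆ {x:ℝ | x ≠ 0} := by
    rw [Set.uIcc_of_le hab]
    intro x hx
    exact (lt_of_lt_of_le ha0 hx.1).ne'
  have huIoc : Set.uIoc a b = Set.Ioc a b := Set.uIoc_of_le hab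
  have hlog : Real.log b - Real.log a = 1/(m:ℝ) * Real.log T := by
    rw [ha_def, hb_def, Real.log_rpow hT0, Real.log_rpow hT0]
    field_simp
    ring
  constructor
  · -- part (i)
    have hint_f1 : IntervalIntegrable
        (fun x:ℝ => x * Complex.abs (aFn d A x - (x:ℂ)⁻¹) ^ 2) MeasureTheory.volume a b :=
      ((contOn_f1 d A).mono huIcc).intervalIntegrable
    have hint_inv : IntervalIntegrable (fun x:ℝ => x⁻¹) MeasureTheory.volume a b := by
      apply ContinuousOn.intervalIntegrable
      exact ContinuousOn.inv₀ continuousOn_id (fun x hx => huIcc hx)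
    have hint_R : IntervalIntegrable
        (fun x:ℝ => x * Complex.abs (aFn d A x - (x:ℂ)⁻¹) ^ 2 - x⁻¹)
        MeasureTheory.volume a b := hint_f1.sub hint_inv
    have hsplit : (∫ x in a..b, x * Complex.abs (aFn d A x - (x:ℂ)⁻¹) ^ 2)
        = (∫ x in a..b, x⁻¹)
          + ∫ x in a..b, (x * Complex.abs (aFn d A x - (x:ℂ)⁻¹) ^ 2 - x⁻¹) := by
      rw [← intervalIntegral.integral_add hint_inv hint_R]
      congr 1
      funext x
      ring
    have hRb : |∫ x in a..b, (x * Complex.abs (aFn d A x - (x:ℂ)⁻¹) ^ 2 - x⁻¹)|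
        ≤ (3*A+1)*(3*A+3) := by
      have h := intervalIntegral.norm_integral_le_of_norm_le_const
        (C := (3*A+1)*(3*A+3))
        (f := fun x:ℝ => x * Complex.abs (aFn d A x - (x:ℂ)⁻¹) ^ 2 - x⁻¹) (a := a) (b := b)
        (fun x hx => by
          rw [huIoc] at hx
          have h0x : 0 < x := lt_trans ha0 hx.1
          have h1x : x ≤ 1 := le_trans hx.2 hb1
          rw [Real.norm_eq_abs]
          exact key_R hA0 h0x h1x)
      rw [Real.norm_eq_abs] at h
      have hba : |b - a| ≤ 1 := by rw [_root_.abs_of_nonneg (by linarith)]; linarith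
      have hK0 : (0:ℝ) ≤ (3*A+1)*(3*A+3) := by nlinarith
      nlinarith
    rw [hsplit, integral_inv_of_pos ha0 hb0, Real.log_div hb0.ne' ha0.ne']
    have hc : 2 * ((Real.log b - Real.log a)
        + ∫ x in a..b, (x * Complex.abs (aFn d A x - (x:ℂ)⁻¹) ^ 2 - x⁻¹))
        - 2/(m:ℝ) * Real.log T
        = 2 * ∫ x in a..b, (x * Complex.abs (aFn d A x - (x:ℂ)⁻¹) ^ 2 - x⁻¹) := by
      rw [hlog]
      field_simp
      ring
    rw [hc, abs_mul, _root_.abs_two]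
    nlinarith [abs_nonneg (∫ x in a..b, (x * Complex.abs (aFn d A x - (x:ℂ)⁻¹) ^ 2 - x⁻¹))]
  · -- part (ii)
    have hint_h1 : IntervalIntegrable (fun x:ℝ => (Complex.exp (-(A:ℂ)*x) - 1) / (x:ℂ))
        MeasureTheory.volume a b := ((contOn_h1 A).mono huIcc).intervalIntegrable
    have hint_h2 : IntervalIntegrable (fun x:ℝ => psi A x * Complex.exp (Complex.I*x*d))
        MeasureTheory.volume a b := by
      apply ContinuousOn.intervalIntegrable
      exact ContinuousOn.mul ((contOn_psi A).mono huIcc) (Continuous.continuousOn (by fun_prop))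
    have hsplit2 : (∫ x in a..b, ((x:ℂ) * aFn d A x - 1) * (x:ℂ)⁻¹)
        = (∫ x in a..b, (Complex.exp (-(A:ℂ)*x) - 1) / (x:ℂ))
          + ∫ x in a..b, psi A x * Complex.exp (Complex.I*x*d) := by
      rw [← intervalIntegral.integral_add hint_h1 hint_h2]
      apply intervalIntegral.integral_congr
      intro x hx
      exact ii_integrand d A (huIcc hx)
    have hd' : (d:ℂ) ≠ 0 := by exact_mod_cast hd0.ne'
    have hv : ∀ x ∈ Set.uIcc a b, HasDerivAt
        (fun y:ℝ => Complex.exp (Complex.I*y*d) / (Complex.I*d))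
        (Complex.exp (Complex.I*x*d)) x := by
      intro x hx
      have hid : HasDerivAt (fun y : ℝ => (y:ℂ)) 1 x := by
        simpa using (hasDerivAt_id x).ofReal_comp
      have h := (((hid.const_mul Complex.I).mul_const (d:ℂ)).cexp).div_const (Complex.I*d)
      convert h using 1
      · rfl
      field_simp
    have hu : ∀ x ∈ Set.uIcc a b, HasDerivAt (psi A) (psi' A x) x :=
      fun x hx => hasDeriv_psi (huIcc hx)
    have hu' : IntervalIntegrable (psi' A) MeasureTheory.volume a b :=
      ((contOn_psi' A).mono huIcc).intervalIntegrable
    have hv' : IntervalIntegrable (fun x:ℝ => Complex.exp (Complex.I*x*d))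
        MeasureTheory.volume a b := Continuous.intervalIntegrable (by fun_prop) _ _
    have hIBP := intervalIntegral.integral_mul_deriv_eq_deriv_mul hu hv hu' hv'
    have habs_v : ∀ x:ℝ, Complex.abs (Complex.exp (Complex.I*x*d)/(Complex.I*d)) = 1/d := by
      intro x
      rw [map_div₀, abs_eD, map_mul, Complex.abs_I, Complex.abs_ofReal,
        _root_.abs_of_pos hd0, one_mul]
    have hbound_h1 : Complex.abs (∫ x in a..b, (Complex.exp (-(A:ℂ)*x) - 1)/(x:ℂ)) ≤ A := by
      rw [← Complex.norm_eq_abs]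
      have h := intervalIntegral.norm_integral_le_of_norm_le_const (C := A)
        (f := fun x:ℝ => (Complex.exp (-(A:ℂ)*x) - 1)/(x:ℂ)) (a := a) (b := b)
        (fun x hx => by
          rw [huIoc] at hx
          have h0x : 0 < x := lt_trans ha0 hx.1
          rw [Complex.norm_eq_abs, map_div₀, Complex.abs_ofReal, _root_.abs_of_pos h0x,
            div_le_iff₀ h0x]
          exact abs_eA_sub (by positivity))
      have hba : |b - a| ≤ 1 := by rw [_root_.abs_of_nonneg (by linarith)]; linarith
      nlinarith
    have hbound_b : Complex.abs (psi A b * (Complex.exp (Complex.I*b*d)/(Complex.I*d))) ≤ 2 := by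
      rw [map_mul, habs_v]
      calc Complex.abs (psi A b) * (1/d) ≤ (2/b)*(1/d) :=
          mul_le_mul_of_nonneg_right (abs_psi_le hA0 hb0 hb1) (by positivity)
        _ ≤ 2 := by
          rw [div_mul_div_comm, mul_one, div_le_iff₀ (by positivity)]
          nlinarith
    have hbound_a : Complex.abs (psi A a * (Complex.exp (Complex.I*a*d)/(Complex.I*d))) ≤ 2 := by
      rw [map_mul, habs_v]
      calc Complex.abs (psi A a) * (1/d) ≤ (2/a)*(1/d) :=
          mul_le_mul_of_nonneg_right (abs_psi_le hA0 ha0 ha1) (by positivity)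
        _ ≤ 2 := by
          rw [div_mul_div_comm, mul_one, div_le_iff₀ (by positivity)]
          nlinarith
    have hbound_int : Complex.abs
        (∫ x in a..b, psi' A x * (Complex.exp (Complex.I*x*d)/(Complex.I*d))) ≤ 2*A+5 := by
      rw [← Complex.norm_eq_abs]
      have hg_int : IntervalIntegrable (fun x:ℝ => (2*A+5)/d * (x^2)⁻¹)
          MeasureTheory.volume a b := by
        apply ContinuousOn.intervalIntegrable
        apply ContinuousOn.mul continuousOn_const
        exact ContinuousOn.inv₀ (by fun_prop) (fun x hx => pow_ne_zero 2 (huIcc hx))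
      have h := intervalIntegral.norm_integral_le_of_norm_le
        (f := fun x:ℝ => psi' A x * (Complex.exp (Complex.I*x*d)/(Complex.I*d)))
        (g := fun x:ℝ => (2*A+5)/d * (x^2)⁻¹) hab ?_ hg_int
      · have hz : (∫ x in a..b, (x:ℝ)^(-2:ℤ))
            = (b ^ ((-2:ℤ) + 1) - a ^ ((-2:ℤ) + 1)) / (((-2:ℤ):ℝ) + 1) := by
          have := integral_zpow (a := a) (b := b) (n := -2) (Or.inr ⟨by norm_num, fun hc => (huIcc hc) rfl⟩)
          simpa using this
        have hval : (∫ x in a..b, (2*A+5)/d * (x^2)⁻¹) = (2*A+5)/d * (a⁻¹ - b⁻¹) := by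
          rw [intervalIntegral.integral_const_mul]
          congr 1
          have hfun : (fun x:ℝ => (x^2)⁻¹) = fun x:ℝ => (x:ℝ)^(-2:ℤ) := by
            funext x
            rw [zpow_neg, zpow_two, pow_two]
          rw [hfun, hz]
          norm_num
          ring
        rw [hval] at h
        have hpos : (0:ℝ) ≤ a⁻¹ - b⁻¹ := by
          rw [sub_nonneg]
          exact inv_anti₀ ha0 hab
        have habs2 : |(2*A+5)/d * (a⁻¹ - b⁻¹)| = (2*A+5)/d * (a⁻¹ - b⁻¹) := by
          apply _root_.abs_of_nonneg
          positivity
        have hfin : (2*A+5)/d * (a⁻¹ - b⁻¹) ≤ 2*A+5 := by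
          rw [div_mul_eq_mul_div, div_le_iff₀ hd0]
          have hainv : a⁻¹ - b⁻¹ ≤ a⁻¹ := by linarith [inv_nonneg.mpr hb0.le]
          have : a⁻¹ ≤ d := by
            rw [inv_le_iff_one_le_mul₀ ha0]
            linarith [hda]
          nlinarith
        linarith
      · refine MeasureTheory.ae_of_all _ ?_
        intro x hx
        have h0x : 0 < x := lt_trans ha0 hx.1
        have h1x : x ≤ 1 := le_trans hx.2 hb1
        rw [Complex.norm_eq_abs, map_mul, habs_v]
        calc Complex.abs (psi' A x) * (1/d) ≤ ((2*A+5)/x^2) * (1/d) :=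
            mul_le_mul_of_nonneg_right (abs_psi'_le hA0 h0x h1x) (by positivity)
          _ = (2*A+5)/d * (x^2)⁻¹ := by ring
    rw [hsplit2, hIBP]
    have t1 := Complex.abs.add_le (∫ x in a..b, (Complex.exp (-(A:ℂ)*x) - 1)/(x:ℂ))
      (psi A b * (Complex.exp (Complex.I*b*d)/(Complex.I*d))
        - psi A a * (Complex.exp (Complex.I*a*d)/(Complex.I*d))
        - ∫ x in a..b, psi' A x * (Complex.exp (Complex.I*x*d)/(Complex.I*d)))
    have t2 := abs_sub_le' (psi A b * (Complex.exp (Complex.I*b*d)/(Complex.I*d))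
        - psi A a * (Complex.exp (Complex.I*a*d)/(Complex.I*d)))
      (∫ x in a..b, psi' A x * (Complex.exp (Complex.I*x*d)/(Complex.I*d)))
    have t3 := abs_sub_le' (psi A b * (Complex.exp (Complex.I*b*d)/(Complex.I*d)))
      (psi A a * (Complex.exp (Complex.I*a*d)/(Complex.I*d)))
    nlinarith
end

section
/- For every A > 0 and all real d and t: ∫_ℝ ((e^{iλd} − 1)/λ)·e^{−A|λ|}·e^{iλt} dλ = 2i·(arctan((t+d)/A) − arctan(t/A)), where the integrand is extended continuously at λ = 0 by the value i·d. In particular, the modulus of this integral is at most 2π, uniformly in d ∈ ℝ, t ∈ ℝ and A > 0. -/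
open MeasureTheory

open Set Filter in
/-- Half-line integral of a decaying complex exponential. -/
lemma stmt4_aux_exp_Ioi {c : ℂ} (hc : c.re < 0) :
    IntegrableOn (fun x : ℝ => Complex.exp (c * x)) (Ioi 0) ∧
    ∫ x in Ioi (0 : ℝ), Complex.exp (c * x) = -(1 / c) := by
  have hc0 : c ≠ 0 := fun h => by simp [h] at hc
  have hnorm : ∀ x : ℝ, ‖Complex.exp (c * x)‖ = Real.exp (c.re * x) := by
    intro x
    rw [Complex.norm_exp]
    congr 1
    simp [Complex.mul_re]
  have hint : IntegrableOn (fun x : ℝ => Complex.exp (c * x)) (Ioi 0) := by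
    have h1 : IntegrableOn (fun x : ℝ => Real.exp (-(-c.re) * x)) (Ioi 0) :=
      exp_neg_integrableOn_Ioi 0 (by linarith)
    refine h1.mono' ?_ ?_
    · exact (Complex.continuous_exp.comp (by fun_prop)).aestronglyMeasurable
    · filter_upwards with x
      rw [hnorm x, neg_neg]
  refine ⟨hint, ?_⟩
  have D : ∀ x : ℝ, HasDerivAt (fun y : ℝ => Complex.exp (c * y) / c)
      (Complex.exp (c * x)) x := by
    intro x
    rw [← mul_div_cancel_right₀ (Complex.exp (c * x)) hc0]
    apply ((Complex.hasDerivAt_exp _).comp x _).div_const c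
    simpa only [mul_one, id] using ((hasDerivAt_id (x : ℂ)).const_mul c).comp_ofReal
  have hlim : Tendsto (fun x : ℝ => Complex.exp (c * x) / c) atTop (nhds 0) := by
    rw [tendsto_zero_iff_norm_tendsto_zero]
    have heq : (fun x : ℝ => ‖Complex.exp (c * x) / c‖)
        = fun x : ℝ => Real.exp (c.re * x) / ‖c‖ := by
      ext x; rw [norm_div, hnorm x]
    rw [heq]
    have h0 : Tendsto (fun x : ℝ => Real.exp (c.re * x)) atTop (nhds 0) :=
      Real.tendsto_exp_atBot.comp ((tendsto_const_mul_atBot_of_neg hc).2 tendsto_id)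
    simpa using h0.div_const ‖c‖
  have := MeasureTheory.integral_Ioi_of_hasDerivAt_of_tendsto
    (f := fun y : ℝ => Complex.exp (c * y) / c) (f' := fun x : ℝ => Complex.exp (c * x))
    (a := 0) (m := 0)
    ((Complex.continuous_exp.comp (by fun_prop)).div_const c).continuousWithinAt
    (fun x _ => D x) hint hlim
  rw [this]
  simp

/-- The Fourier transform of the two-sided exponential kernel. -/
lemma stmt4_aux_kernel (A : ℝ) (hA : 0 < A) (v : ℝ) :
    Integrable (fun x : ℝ => Complex.exp (-(A : ℂ) * |x| + Complex.I * x * v)) ∧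
    ∫ x : ℝ, Complex.exp (-(A : ℂ) * |x| + Complex.I * x * v)
      = ((2 * A / (A ^ 2 + v ^ 2) : ℝ) : ℂ) := by
  set c₁ : ℂ := -A + Complex.I * v with hc₁
  set c₂ : ℂ := -A - Complex.I * v with hc₂
  have hre₁ : c₁.re < 0 := by simp [hc₁]; linarith
  have hre₂ : c₂.re < 0 := by simp [hc₂]; linarith
  have h₁ := stmt4_aux_exp_Ioi hre₁
  have h₂ := stmt4_aux_exp_Ioi hre₂
  set g : ℝ → ℂ := fun x => Complex.exp (-(A : ℂ) * |x| + Complex.I * x * v) with hg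
  have heq₁ : Set.EqOn g (fun x : ℝ => Complex.exp (c₁ * x)) (Set.Ioi 0) := by
    intro x hx
    simp only [hg, hc₁]
    congr 1
    rw [abs_of_pos hx]
    push_cast
    ring
  have heq₂ : ∀ x ∈ Set.Ioi (0 : ℝ), g (-x) = Complex.exp (c₂ * x) := by
    intro x hx
    simp only [hg, hc₂]
    congr 1
    rw [abs_neg, abs_of_pos hx]
    push_cast
    ring
  have hIoi : IntegrableOn g (Set.Ioi 0) :=
    (h₁.1.congr_fun (fun x hx => (heq₁ hx).symm) measurableSet_Ioi : _)
  have hIio : IntegrableOn g (Set.Iio 0) := by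
    have hpre : IntegrableOn (g ∘ (fun x : ℝ => -x)) ((fun x : ℝ => -x) ⁻¹' Set.Iio 0) := by
      have : (fun x : ℝ => -x) ⁻¹' Set.Iio 0 = Set.Ioi 0 := by
        ext x; simp
      rw [this]
      exact (h₂.1.congr_fun (fun x hx => (heq₂ x hx).symm) measurableSet_Ioi : _)
    exact (MeasurePreserving.integrableOn_comp_preimage
      (Measure.measurePreserving_neg _) (Homeomorph.neg ℝ).measurableEmbedding).1 hpre
  have hIic : IntegrableOn g (Set.Iic 0) := by
    unfold IntegrableOn
    rwa [← Measure.restrict_congr_set MeasureTheory.Iio_ae_eq_Iic]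
  have hint : Integrable g := by
    rw [← integrableOn_univ, ← Set.Iic_union_Ioi (a := (0 : ℝ))]
    exact hIic.union hIoi
  refine ⟨hint, ?_⟩
  have hsplit := intervalIntegral.integral_Iic_add_Ioi (b := (0 : ℝ)) (f := g) hIic hIoi
  have hI1 : ∫ x in Set.Ioi (0 : ℝ), g x = -(1 / c₁) := by
    rw [setIntegral_congr_fun measurableSet_Ioi heq₁]; exact h₁.2
  have hI2 : ∫ x in Set.Iic (0 : ℝ), g x = -(1 / c₂) := by
    rw [show (0 : ℝ) = -0 by norm_num, ← integral_comp_neg_Ioi]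
    rw [setIntegral_congr_fun measurableSet_Ioi (fun x hx => heq₂ x (by simpa using hx))]
    exact h₂.2
  rw [← hsplit, hI1, hI2]
  have hne : (A : ℂ) ^ 2 + (v : ℂ) ^ 2 ≠ 0 := by
    have : ((A ^ 2 + v ^ 2 : ℝ) : ℂ) ≠ 0 := by
      exact_mod_cast ne_of_gt (by positivity)
    push_cast at this
    convert this using 2 <;> ring_nf
  have hc₁ne : c₁ ≠ 0 := fun h => by rw [h] at hre₁; simp at hre₁
  have hc₂ne : c₂ ≠ 0 := fun h => by rw [h] at hre₂; simp at hre₂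
  rw [hc₁] at hc₁ne
  rw [hc₂] at hc₂ne
  rw [hc₁, hc₂]
  push_cast
  field_simp
  ring_nf
  rw [Complex.I_sq]
  ring

/-- Bound `|e^{iθ} − 1| ≤ |θ|`. -/
lemma stmt4_aux_exp_bound (θ : ℝ) :
    ‖Complex.exp (Complex.I * θ) - 1‖ ≤ |θ| := by
  have h : Complex.exp (Complex.I * θ) - 1
      = ((Real.cos θ - 1 : ℝ) : ℂ) + ((Real.sin θ : ℝ) : ℂ) * Complex.I := by
    rw [mul_comm, Complex.exp_mul_I]
    push_cast
    ring
  rw [h, Complex.norm_def, Complex.normSq_add_mul_I]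
  rw [show |θ| = Real.sqrt (θ ^ 2) by rw [Real.sqrt_sq_eq_abs]]
  apply Real.sqrt_le_sqrt
  have h1 : Real.cos θ ^ 2 + Real.sin θ ^ 2 = 1 := Real.cos_sq_add_sin_sq θ
  have h2 : 1 - θ ^ 2 / 2 ≤ Real.cos θ := Real.one_sub_sq_div_two_le_cos
  nlinarith [Real.neg_one_le_cos θ, Real.cos_le_one θ]


private noncomputable def stmt4F (A t s x : ℝ) : ℂ :=
  (if x = 0 then Complex.I * (s : ℂ)
    else (Complex.exp (Complex.I * x * s) - 1) / (x : ℂ)) *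
    Complex.exp (-(A : ℂ) * |x|) * Complex.exp (Complex.I * x * t)

lemma stmt4_norm_exp (A v x : ℝ) :
    ‖Complex.exp (-(A : ℂ) * |x| + Complex.I * x * v)‖ = Real.exp (-A * |x|) := by
  rw [Complex.norm_exp]
  congr 1
  simp [Complex.add_re, Complex.mul_re]

lemma stmt4_exp_integrable (A : ℝ) (hA : 0 < A) :
    Integrable (fun x : ℝ => Real.exp (-A * |x|)) := by
  refine ((stmt4_aux_kernel A hA 0).1.norm).congr ?_
  filter_upwards with x
  exact stmt4_norm_exp A 0 x

lemma stmt4F_aemeas (A t s : ℝ) : AEStronglyMeasurable (stmt4F A t s) volume := by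
  have h0 : ∀ᵐ x : ℝ, x ≠ 0 := by
    rw [MeasureTheory.ae_iff]
    simp only [not_not]
    rw [show {x : ℝ | x = 0} = {0} from Set.setOf_eq_eq_singleton]
    exact measure_singleton 0
  have hmeas : AEStronglyMeasurable (fun x : ℝ =>
      ((Complex.exp (Complex.I * x * s) - 1) / (x : ℂ)) *
        Complex.exp (-(A : ℂ) * |x|) * Complex.exp (Complex.I * x * t)) volume := by
    apply Measurable.aestronglyMeasurable
    fun_prop
  refine hmeas.congr ?_
  filter_upwards [h0] with x hx
  simp [stmt4F, hx]

lemma stmt4F_norm_le (A t : ℝ) (s x : ℝ) :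
    ‖stmt4F A t s x‖ ≤ |s| * Real.exp (-A * |x|) := by
  unfold stmt4F
  rw [norm_mul, norm_mul]
  have e1 : ‖Complex.exp (-(A : ℂ) * |x|)‖ = Real.exp (-A * |x|) := by
    rw [Complex.norm_exp]
    congr 1
    simp [Complex.mul_re]
  have e2 : ‖Complex.exp (Complex.I * x * t)‖ = 1 := by
    rw [Complex.norm_exp]
    norm_num [Complex.add_re, Complex.mul_re, Complex.mul_im]
  rw [e1, e2, mul_one]
  have hfirst : ‖if x = 0 then Complex.I * (s : ℂ)
      else (Complex.exp (Complex.I * x * s) - 1) / (x : ℂ)‖ ≤ |s| := by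
    split_ifs with h
    · rw [norm_mul, Complex.norm_I, one_mul,
        Complex.norm_real, Real.norm_eq_abs]
    · rw [norm_div]
      have hx : (0 : ℝ) < |x| := abs_pos.2 h
      rw [div_le_iff₀ (by simpa [Complex.norm_real, Real.norm_eq_abs] using hx : (0:ℝ) < ‖(x:ℂ)‖)]
      have hb : ‖Complex.exp (Complex.I * x * s) - 1‖ ≤ |x * s| := by
        have h1 : Complex.I * x * s = Complex.I * ((x * s : ℝ) : ℂ) := by push_cast; ring
        rw [h1]
        exact stmt4_aux_exp_bound (x * s)
      refine hb.trans ?_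
      rw [abs_mul, Complex.norm_real, Real.norm_eq_abs]
      ring_nf
      exact le_refl _
  calc ‖if x = 0 then Complex.I * (s : ℂ)
      else (Complex.exp (Complex.I * x * s) - 1) / (x : ℂ)‖ * Real.exp (-A * |x|)
      ≤ |s| * Real.exp (-A * |x|) := by
        gcongr

lemma stmt4F_integrable (A t : ℝ) (hA : 0 < A) (s : ℝ) :
    Integrable (stmt4F A t s) := by
  refine Integrable.mono' ((stmt4_exp_integrable A hA).const_mul |s|) (stmt4F_aemeas A t s) ?_
  filter_upwards with x
  exact stmt4F_norm_le A t s x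

lemma stmt4F_deriv (A t : ℝ) (s x : ℝ) :
    HasDerivAt (fun u : ℝ => stmt4F A t u x)
      (Complex.I * Complex.exp (-(A : ℂ) * |x| + Complex.I * x * ((s + t : ℝ) : ℂ))) s := by
  have hexp : Complex.exp (-(A : ℂ) * |x| + Complex.I * x * ((s + t : ℝ) : ℂ))
      = Complex.exp (Complex.I * x * s) *
        (Complex.exp (-(A : ℂ) * |x|) * Complex.exp (Complex.I * x * t)) := by
    rw [← Complex.exp_add, ← Complex.exp_add]
    congr 1
    push_cast
    ring
  by_cases h : x = 0
  · subst h
    have e : (fun u : ℝ => stmt4F A t u 0) = fun u : ℝ => Complex.I * (u : ℂ) := by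
      funext u; unfold stmt4F; simp
    rw [e]
    have hd : HasDerivAt (fun u : ℝ => Complex.I * (u : ℂ)) Complex.I s := by
      simpa using ((hasDerivAt_id ((s : ℝ) : ℂ)).const_mul Complex.I).comp_ofReal
    convert hd using 1
    simp
  · have hx : (x : ℂ) ≠ 0 := Complex.ofReal_ne_zero.2 h
    have e : (fun u : ℝ => stmt4F A t u x)
        = fun u : ℝ => ((Complex.exp (Complex.I * x * u) - 1) / (x : ℂ)) *
            Complex.exp (-(A : ℂ) * |x|) * Complex.exp (Complex.I * x * t) := by
      funext u; unfold stmt4F; rw [if_neg h]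
    rw [e]
    have h1 : HasDerivAt (fun z : ℂ => Complex.I * x * z) (Complex.I * x) ((s : ℝ) : ℂ) := by
      simpa using (hasDerivAt_id ((s : ℝ) : ℂ)).const_mul (Complex.I * (x : ℂ))
    have h2 : HasDerivAt (fun z : ℂ => ((Complex.exp (Complex.I * x * z) - 1) / (x : ℂ)) *
          Complex.exp (-(A : ℂ) * |x|) * Complex.exp (Complex.I * x * t))
        ((Complex.exp (Complex.I * x * s) * (Complex.I * x) / (x : ℂ)) *
          Complex.exp (-(A : ℂ) * |x|) * Complex.exp (Complex.I * x * t)) ((s : ℝ) : ℂ) := by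
      exact (((((Complex.hasDerivAt_exp _).comp _ h1).sub_const 1).div_const
        (x : ℂ)).mul_const _).mul_const _
    have h3 := h2.comp_ofReal
    convert h3 using 1
    rw [hexp]
    field_simp

lemma stmt4_intF_hasDeriv (A t : ℝ) (hA : 0 < A) (s : ℝ) :
    HasDerivAt (fun u : ℝ => ∫ x : ℝ, stmt4F A t u x)
      (Complex.I * ((2 * A / (A ^ 2 + (s + t) ^ 2) : ℝ) : ℂ)) s := by
  have key := hasDerivAt_integral_of_dominated_loc_of_deriv_le
    (μ := volume) (F := fun u x => stmt4F A t u x)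
    (F' := fun (u : ℝ) (x : ℝ) =>
      Complex.I * Complex.exp (-(A : ℂ) * |x| + Complex.I * x * ((u + t : ℝ) : ℂ)))
    (x₀ := s) (bound := fun x => Real.exp (-A * |x|)) (Metric.ball_mem_nhds s one_pos)
    (Filter.Eventually.of_forall (fun u => stmt4F_aemeas A t u))
    (stmt4F_integrable A t hA s)
    (Continuous.aestronglyMeasurable (by fun_prop))
    (by
      filter_upwards with x u _
      rw [norm_mul, Complex.norm_I, one_mul,
        stmt4_norm_exp A (u + t) x])
    (stmt4_exp_integrable A hA)
    (by
      filter_upwards with x u _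
      exact stmt4F_deriv A t u x)
  have h2 := key.2
  have hval : ∫ x : ℝ, Complex.I * Complex.exp (-(A : ℂ) * |x| + Complex.I * x * ((s + t : ℝ) : ℂ))
      = Complex.I * ((2 * A / (A ^ 2 + (s + t) ^ 2) : ℝ) : ℂ) := by
    rw [MeasureTheory.integral_const_mul, (stmt4_aux_kernel A hA (s + t)).2]
  rwa [hval] at h2

lemma stmt4_integral (A t : ℝ) (hA : 0 < A) (d : ℝ) :
    ∫ x : ℝ, stmt4F A t d x
      = 2 * Complex.I * ((Real.arctan ((t + d) / A) - Real.arctan (t / A) : ℝ) : ℂ) := by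
  set F' : ℝ → ℂ := fun s => Complex.I * ((2 * A / (A ^ 2 + (s + t) ^ 2) : ℝ) : ℂ) with hF'
  have hAne : A ≠ 0 := ne_of_gt hA
  have hcont : Continuous F' := by
    apply continuous_const.mul
    apply Complex.continuous_ofReal.comp
    exact Continuous.div continuous_const (by fun_prop) (fun s => by positivity)
  have hFTC1 := intervalIntegral.integral_eq_sub_of_hasDerivAt
    (f := fun u : ℝ => ∫ x : ℝ, stmt4F A t u x) (f' := F') (a := 0) (b := d)
    (fun u _ => stmt4_intF_hasDeriv A t hA u) (hcont.intervalIntegrable 0 d)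
  have hH : ∀ u : ℝ, HasDerivAt
      (fun u : ℝ => 2 * Complex.I * ((Real.arctan ((t + u) / A) : ℝ) : ℂ)) (F' u) u := by
    intro u
    have h1 : HasDerivAt (fun u : ℝ => (t + u) / A) (1 / A) u := by
      simpa using ((hasDerivAt_id u).const_add t).div_const A
    have h2 : HasDerivAt (fun u : ℝ => Real.arctan ((t + u) / A))
        ((1 / (1 + ((t + u) / A) ^ 2)) * (1 / A)) u :=
      (Real.hasDerivAt_arctan _).comp u h1
    have h3 := (h2.ofReal_comp).const_mul (2 * Complex.I)
    refine h3.congr_deriv ?_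
    symm
    show Complex.I * ((2 * A / (A ^ 2 + (u + t) ^ 2) : ℝ) : ℂ)
      = 2 * Complex.I * ((1 / (1 + ((t + u) / A) ^ 2) * (1 / A) : ℝ) : ℂ)
    have hr : 2 * A / (A ^ 2 + (u + t) ^ 2) = 2 * ((1 / (1 + ((t + u) / A) ^ 2)) * (1 / A)) := by
      have hpos : (0 : ℝ) < A ^ 2 + (u + t) ^ 2 := by positivity
      field_simp
      ring
    rw [hr]
    push_cast
    ring
  have hFTC2 := intervalIntegral.integral_eq_sub_of_hasDerivAt
    (f := fun u : ℝ => 2 * Complex.I * ((Real.arctan ((t + u) / A) : ℝ) : ℂ)) (f' := F')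
    (a := 0) (b := d) (fun u _ => hH u) (hcont.intervalIntegrable 0 d)
  have hF0 : ∫ x : ℝ, stmt4F A t 0 x = 0 := by
    have hz : ∀ x : ℝ, stmt4F A t 0 x = 0 := by
      intro x; unfold stmt4F; split_ifs <;> simp
    simp only [hz, integral_zero]
  have hcomb := hFTC1.symm.trans hFTC2
  simp only [hF0, sub_zero] at hcomb
  rw [hcomb]
  push_cast
  ring

/-- explicit computation of the Hilbert-transform-type integral
`∫_ℝ ((e^{iλd}−1)/λ)·e^{−A|λ|}·e^{iλt} dλ = 2i(arctan((t+d)/A) − arctan(t/A))`, with integrand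
extended continuously at `λ = 0` by the value `i·d`; in particular its modulus is at most `2π`. -/
theorem stmt_4 (A d t : ℝ) (hA : 0 < A) :
    Integrable (fun x : ℝ =>
      (if x = 0 then Complex.I * (d : ℂ)
        else (Complex.exp (Complex.I * x * d) - 1) / (x : ℂ)) *
        Complex.exp (-(A : ℂ) * |x|) * Complex.exp (Complex.I * x * t)) ∧
    (∫ x : ℝ,
        (if x = 0 then Complex.I * (d : ℂ)
          else (Complex.exp (Complex.I * x * d) - 1) / (x : ℂ)) *
          Complex.exp (-(A : ℂ) * |x|) * Complex.exp (Complex.I * x * t)) =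
      2 * Complex.I * ((Real.arctan ((t + d) / A) - Real.arctan (t / A) : ℝ) : ℂ) ∧
    ‖(∫ x : ℝ,
        (if x = 0 then Complex.I * (d : ℂ)
          else (Complex.exp (Complex.I * x * d) - 1) / (x : ℂ)) *
          Complex.exp (-(A : ℂ) * |x|) * Complex.exp (Complex.I * x * t))‖ ≤ 2 * Real.pi := by
  have hIntegrable := stmt4F_integrable A t hA d
  have hVal := stmt4_integral A t hA d
  have e : (fun x : ℝ =>
      (if x = 0 then Complex.I * (d : ℂ)
        else (Complex.exp (Complex.I * x * d) - 1) / (x : ℂ)) *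
        Complex.exp (-(A : ℂ) * |x|) * Complex.exp (Complex.I * x * t)) = stmt4F A t d := rfl
  rw [e]
  refine ⟨hIntegrable, hVal, ?_⟩
  rw [hVal]
  rw [norm_mul, norm_mul, Complex.norm_two, Complex.norm_I, mul_one, Complex.norm_real, Real.norm_eq_abs]
  have ha1 := Real.arctan_lt_pi_div_two ((t + d) / A)
  have ha2 := Real.neg_pi_div_two_lt_arctan ((t + d) / A)
  have hb1 := Real.arctan_lt_pi_div_two (t / A)
  have hb2 := Real.neg_pi_div_two_lt_arctan (t / A)
  have habs : |Real.arctan ((t + d) / A) - Real.arctan (t / A)| ≤ Real.pi := by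
    rw [abs_le]
    constructor <;> linarith
  linarith
end

section
/- For every A > 0 and every d ∈ ℝ: 2·∫₀^∞ λ²·|a_{d,A}(λ)|² dλ ≤ 4/A, where a_{d,A}(λ) = (1 − (e^{iλ}−1)·e^{iλd}/(iλ))·e^{−Aλ}/λ for λ > 0. -/
open MeasureTheory

lemma abs_exp_I_mul_sub_one_le (x : ℝ) :
    ‖Complex.exp (Complex.I * x) - 1‖ ≤ |x| := by
  have hsq : ‖Complex.exp (Complex.I * x) - 1‖ ^ 2
      = (Real.cos x - 1) ^ 2 + Real.sin x ^ 2 := by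
    rw [mul_comm, Complex.exp_mul_I, ← Complex.ofReal_cos, ← Complex.ofReal_sin,
      Complex.sq_norm, Complex.normSq_apply]
    simp [pow_two, Complex.cos_ofReal_re, Complex.sin_ofReal_re]
  have hcos : 1 - x ^ 2 / 2 ≤ Real.cos x := Real.one_sub_sq_div_two_le_cos
  have hbound : ‖Complex.exp (Complex.I * x) - 1‖ ^ 2 ≤ |x| ^ 2 := by
    rw [hsq, sq_abs]
    nlinarith [Real.sin_sq_add_cos_sq x]
  nlinarith [abs_nonneg x, norm_nonneg (Complex.exp (Complex.I * x) - 1)]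

lemma integral_exp_neg_mul_Ioi_zero {b : ℝ} (hb : 0 < b) :
    ∫ x in Set.Ioi (0 : ℝ), Real.exp (-(b * x)) = 1 / b := by
  have h : ∫ x in Set.Ioi (0 : ℝ), Real.exp (-(b * x)) = 0 - (-Real.exp (-(b * 0)) / b) := by
    refine integral_Ioi_of_hasDerivAt_of_tendsto' (f := fun x => -Real.exp (-(b * x)) / b)
      (fun x _ => ?_) ?_ ?_
    · have h1 : HasDerivAt (fun x : ℝ => Real.exp (-(b * x))) (Real.exp (-(b * x)) * (-b)) x := by
        simpa using (((hasDerivAt_id' x).const_mul b).neg).exp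
      convert (h1.neg.div_const b) using 1
      · rfl
      · rfl
      · simp [hb.ne']
    · exact (exp_neg_integrableOn_Ioi 0 hb).congr_fun
        (fun x _ => by simp only [neg_mul]) measurableSet_Ioi
    · have h2 : Filter.Tendsto (fun x : ℝ => Real.exp (-(b * x))) Filter.atTop (nhds 0) := by
        apply Real.tendsto_exp_atBot.comp
        exact Filter.tendsto_neg_atBot_iff.mpr
          (Filter.Tendsto.const_mul_atTop hb Filter.tendsto_id)
      simpa using (h2.neg.div_const b)
  rw [h]
  field_simp
  simp

/-- the squared `H₁` Sobolev seminorm of `f^{d,A}` is at most `4/A`. -/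
theorem stmt_6 (A d : ℝ) (hA : 0 < A) :
    2 * ∫⁻ x in Set.Ioi (0 : ℝ), ENNReal.ofReal (x ^ 2 * ‖aFn d A x‖ ^ 2) ≤
      ENNReal.ofReal (4 / A) := by
  have h2A : (0 : ℝ) < 2 * A := by linarith
  -- pointwise bound
  have hpt : ∀ x ∈ Set.Ioi (0 : ℝ),
      x ^ 2 * ‖aFn d A x‖ ^ 2 ≤ 4 * Real.exp (-(2 * A * x)) := by
    intro x hx
    have hx0 : (0 : ℝ) < x := hx
    set M := ‖(1 - (Complex.exp (Complex.I * x) - 1) *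
        Complex.exp (Complex.I * x * d) / (Complex.I * x))‖ with hMdef
    have hM : M ≤ 2 := by
      have h1 : ‖((Complex.exp (Complex.I * x) - 1) *
          Complex.exp (Complex.I * x * d) / (Complex.I * x))‖ ≤ 1 := by
        rw [norm_div, norm_mul]
        have habs2 : ‖Complex.exp (Complex.I * x * d)‖ = 1 := by
          rw [show Complex.I * x * d = ((x * d : ℝ) : ℂ) * Complex.I by push_cast; ring]
          exact Complex.norm_exp_ofReal_mul_I (x * d)
        have habs3 : ‖Complex.I * (x : ℂ)‖ = x := by
          simp [abs_of_pos hx0]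
        rw [habs2, habs3, mul_one, div_le_one hx0]
        exact (abs_exp_I_mul_sub_one_le x).trans_eq (abs_of_pos hx0)
      calc M ≤ ‖(1 : ℂ)‖ + ‖((Complex.exp (Complex.I * x) - 1) *
            Complex.exp (Complex.I * x * d) / (Complex.I * x))‖ :=
            norm_sub_le _ _
        _ ≤ 1 + 1 := by rw [norm_one]; linarith
        _ = 2 := by norm_num
    have habsA : ‖Complex.exp (-(A : ℂ) * x)‖ = Real.exp (-(A * x)) := by
      rw [show -(A : ℂ) * x = ((-(A * x) : ℝ) : ℂ) by push_cast; ring, Complex.norm_exp_ofReal]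
    have haFn : ‖aFn d A x‖ = M * Real.exp (-(A * x)) / x := by
      rw [aFn, norm_div, norm_mul, habsA, Complex.norm_real, Real.norm_eq_abs, abs_of_pos hx0]
    rw [haFn]
    have heq : x ^ 2 * (M * Real.exp (-(A * x)) / x) ^ 2
        = M ^ 2 * Real.exp (-(A * x)) ^ 2 := by
      field_simp
    have hexp : Real.exp (-(A * x)) ^ 2 = Real.exp (-(2 * A * x)) := by
      rw [sq, ← Real.exp_add]; ring_nf
    rw [heq, hexp]
    have hM0 : 0 ≤ M := hMdef ▸ norm_nonneg _
    have hMsq : M ^ 2 ≤ 4 := by nlinarith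
    exact mul_le_mul_of_nonneg_right hMsq (Real.exp_nonneg _)
  have hmono : (∫⁻ x in Set.Ioi (0 : ℝ), ENNReal.ofReal (x ^ 2 * ‖aFn d A x‖ ^ 2))
      ≤ ∫⁻ x in Set.Ioi (0 : ℝ), ENNReal.ofReal (4 * Real.exp (-(2 * A * x))) := by
    refine setLIntegral_mono (((Real.measurable_exp.comp ((measurable_id.const_mul (2 * A)).neg)).const_mul 4).ennreal_ofReal) (fun x hx => ?_)
    exact ENNReal.ofReal_le_ofReal (hpt x hx)
  have hint : IntegrableOn (fun x : ℝ => 4 * Real.exp (-(2 * A * x))) (Set.Ioi 0) :=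
    ((exp_neg_integrableOn_Ioi 0 h2A).congr_fun
      (fun x _ => by rw [neg_mul]) measurableSet_Ioi).const_mul 4
  have heval : (∫⁻ x in Set.Ioi (0 : ℝ), ENNReal.ofReal (4 * Real.exp (-(2 * A * x))))
      = ENNReal.ofReal (2 / A) := by
    rw [← ofReal_integral_eq_lintegral_ofReal hint
      (Filter.Eventually.of_forall fun x => by positivity)]
    rw [integral_const_mul, integral_exp_neg_mul_Ioi_zero h2A]
    congr 1
    field_simp
    ring
  calc 2 * ∫⁻ x in Set.Ioi (0 : ℝ), ENNReal.ofReal (x ^ 2 * ‖aFn d A x‖ ^ 2)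
      ≤ 2 * ENNReal.ofReal (2 / A) := by
        exact mul_le_mul_right (hmono.trans_eq heval) 2
    _ = ENNReal.ofReal (4 / A) := by
        rw [show (4 : ℝ) / A = 2 * (2 / A) by ring,
          ENNReal.ofReal_mul (by norm_num), ENNReal.ofReal_ofNat]
end

section
/- For every measurable function a : ℝ → ℂ and every d > 0: ∫_d^∞ ∫_0^∞ |a(s+t)|² dt ds ≤ (1/d)·∫_d^∞ u²·|a(u)|² du (as an inequality of integrals with values in [0,∞]). -/
open MeasureTheory

/-- the squared Hilbert–Schmidt norm of the restricted continual Hankel operator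
`χ_{[d,∞)}𝔥(h)` with symbol `a = ĥ` is bounded by `(1/d)·∫_d^∞ u²|a(u)|² du`. -/
theorem stmt_7 (a : ℝ → ℂ) (ha : Measurable a) (d : ℝ) (hd : 0 < d) :
    ∫⁻ s in Set.Ioi d, ∫⁻ t in Set.Ioi (0 : ℝ), ENNReal.ofReal (‖a (s + t)‖ ^ 2) ≤
      ENNReal.ofReal (1 / d) *
        ∫⁻ u in Set.Ioi d, ENNReal.ofReal (u ^ 2 * ‖a u‖ ^ 2) := by
  set f : ℝ → ENNReal := fun u => ENNReal.ofReal (‖a u‖ ^ 2) with hf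
  have hfm : Measurable f := by
    apply Measurable.ennreal_ofReal
    exact ((continuous_norm.measurable.comp ha).pow measurable_const)
  -- Step 1: translation of the inner integral
  have step1 : ∀ s : ℝ, ∫⁻ t in Set.Ioi (0 : ℝ), f (s + t) = ∫⁻ u in Set.Ioi s, f u := by
    intro s
    rw [← lintegral_indicator measurableSet_Ioi _,
        ← lintegral_indicator measurableSet_Ioi _,
        ← lintegral_add_right_eq_self ((Set.Ioi s).indicator f) s]
    congr 1
    funext t
    simp only [Set.indicator, Set.mem_Ioi]
    by_cases h : 0 < t
    · simp [h, lt_add_iff_pos_left, add_comm]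
    · simp [h, lt_add_iff_pos_left]
  rw [show (∫⁻ s in Set.Ioi d, ∫⁻ t in Set.Ioi (0:ℝ), ENNReal.ofReal (‖a (s + t)‖ ^ 2)) = ∫⁻ s in Set.Ioi d, ∫⁻ u in Set.Ioi s, f u from lintegral_congr fun s => step1 s]
  -- Step 2: Tonelli
  set g : ℝ × ℝ → ENNReal := fun p => if p.1 < p.2 then f p.2 else 0 with hg
  have hgm : Measurable g := by
    apply Measurable.ite (measurableSet_lt measurable_fst measurable_snd)
    · exact hfm.comp measurable_snd
    · exact measurable_const
  have step2 : ∫⁻ s in Set.Ioi d, ∫⁻ u in Set.Ioi s, f u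
      = ∫⁻ u, f u * ENNReal.ofReal (u - d) := by
    have h1 : ∀ s : ℝ, ∫⁻ u in Set.Ioi s, f u = ∫⁻ u, g (s, u) := by
      intro s
      rw [← lintegral_indicator measurableSet_Ioi _]
      exact lintegral_congr fun u => by simp [hg, Set.indicator, Set.mem_Ioi]
    simp only [h1]
    rw [lintegral_lintegral_swap (hgm.aemeasurable)]
    refine lintegral_congr fun u => ?_
    have h2 : (fun s => g (s, u)) = (Set.Iio u).indicator (fun _ => f u) := by
      funext s
      simp [hg, Set.indicator, Set.mem_Iio]
    rw [h2, lintegral_indicator measurableSet_Iio _, Measure.restrict_restrict measurableSet_Iio,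
        setLIntegral_const]
    have : Set.Iio u ∩ Set.Ioi d = Set.Ioo d u := by
      ext x; simp [Set.mem_Ioo, and_comm]
    rw [this, Real.volume_Ioo]
  rw [step2]
  -- restrict to Ioi d
  have step3 : ∫⁻ u, f u * ENNReal.ofReal (u - d)
      = ∫⁻ u in Set.Ioi d, f u * ENNReal.ofReal (u - d) := by
    rw [← lintegral_indicator measurableSet_Ioi _]
    congr 1
    funext u
    simp only [Set.indicator, Set.mem_Ioi]
    by_cases h : d < u
    · simp [h]
    · have hz : ENNReal.ofReal (u - d) = 0 :=
        ENNReal.ofReal_eq_zero.2 (by linarith [not_lt.1 h])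
      simp [h, hz]
  rw [step3]
  -- pointwise bound
  calc ∫⁻ u in Set.Ioi d, f u * ENNReal.ofReal (u - d)
      ≤ ∫⁻ u in Set.Ioi d, ENNReal.ofReal (1 / d) *
          ENNReal.ofReal (u ^ 2 * ‖a u‖ ^ 2) := by
        apply setLIntegral_mono
        · exact measurable_const.mul (Measurable.ennreal_ofReal
            ((measurable_id.pow measurable_const).mul
              ((continuous_norm.measurable.comp ha).pow measurable_const)))
        intro u hu
        simp only [Set.mem_Ioi] at hu
        rw [hf, ← ENNReal.ofReal_mul (by positivity), ← ENNReal.ofReal_mul (by positivity)]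
        apply ENNReal.ofReal_le_ofReal
        have h1 : u - d ≤ u ^ 2 / d := by
          rw [le_div_iff₀ hd]
          nlinarith
        have h2 : (0 : ℝ) ≤ ‖a u‖ ^ 2 := by positivity
        calc ‖a u‖ ^ 2 * (u - d) ≤ ‖a u‖ ^ 2 * (u ^ 2 / d) :=
              mul_le_mul_of_nonneg_left h1 h2
          _ = 1 / d * (u ^ 2 * ‖a u‖ ^ 2) := by ring
    _ = ENNReal.ofReal (1 / d) *
        ∫⁻ u in Set.Ioi d, ENNReal.ofReal (u ^ 2 * ‖a u‖ ^ 2) := by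
        rw [lintegral_const_mul]
        apply Measurable.ennreal_ofReal
        exact (measurable_id.pow measurable_const).mul
          ((continuous_norm.measurable.comp ha).pow measurable_const)
end

section
/- Let α > 0 and let Z be a random variable on a probability space taking values in the non-negative integers such that P(Z = k) ≤ exp(−α·k²) for every integer k ≥ 1. Then for every γ with 0 < γ < α: E[exp(γ·Z²)] ≤ exp( γ / ((1 − exp(γ−α))·(1 − exp(−α))) ). -/
open MeasureTheory

/-- Geometric-type bound: `s^m - x^m ≤ γ * ∑_{j<m} s^j x^(m-1-j)` when `0 ≤ s - x ≤ γ`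
and the summands are nonnegative. -/
lemma aux_geom_bound {s x γ : ℝ} (hx0 : 0 ≤ x) (hs0 : 0 ≤ s) (hsxγ : s - x ≤ γ) (m : ℕ) :
    s ^ m - x ^ m ≤ γ * ∑ j ∈ Finset.range m, s ^ j * x ^ (m - 1 - j) := by
  have hgeom := geom_sum₂_mul s x m
  have hQ : 0 ≤ ∑ j ∈ Finset.range m, s ^ j * x ^ (m - 1 - j) :=
    Finset.sum_nonneg fun j _ => mul_nonneg (pow_nonneg hs0 _) (pow_nonneg hx0 _)
  nlinarith [mul_le_mul_of_nonneg_left hsxγ hQ]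

/-- The injection `(n, j) ↦ (j, n² - 1 - j)` used to compare the double sum with the full
product of two geometric series. -/
lemma aux_inj : Function.Injective
    (fun q : Σ n : ℕ, Fin (n ^ 2) => ((q.2 : ℕ), q.1 ^ 2 - 1 - (q.2 : ℕ))) := by
  rintro ⟨n₁, j₁⟩ ⟨n₂, j₂⟩ h
  simp only [Prod.mk.injEq] at h
  obtain ⟨h1, h2⟩ := h
  have hj₁ := j₁.2
  have hj₂ := j₂.2
  have hn : n₁ ^ 2 = n₂ ^ 2 := by omega
  have hn' : n₁ = n₂ := Nat.pow_left_injective (by norm_num) hn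
  subst hn'
  simpa using Fin.ext h1

/-- super-Gaussian tails `P(Z = k) ≤ exp(−αk²)` for a nonnegative-integer-valued
random variable imply the bound `E exp(γZ²) ≤ exp(γ/((1−e^{γ−α})(1−e^{−α})))` for `0 < γ < α`. -/
theorem stmt_8 (Ω : Type) [MeasurableSpace Ω] (μ : Measure Ω) [IsProbabilityMeasure μ]
    (α : ℝ) (hα : 0 < α) (Z : Ω → ℕ) (hZ : Measurable Z)
    (htail : ∀ k : ℕ, 1 ≤ k → (μ {ω | Z ω = k}).toReal ≤ Real.exp (-α * (k : ℝ) ^ 2))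
    (γ : ℝ) (hγ0 : 0 < γ) (hγα : γ < α) :
    ∫⁻ ω, ENNReal.ofReal (Real.exp (γ * (Z ω : ℝ) ^ 2)) ∂μ ≤
      ENNReal.ofReal (Real.exp (γ / ((1 - Real.exp (γ - α)) * (1 - Real.exp (-α))))) := by
  set s : ℝ := Real.exp (γ - α) with hs_def
  set x : ℝ := Real.exp (-α) with hx_def
  have hx0 : 0 < x := Real.exp_pos _
  have hs0 : 0 < s := Real.exp_pos _
  have hxs : x < s := Real.exp_lt_exp.2 (by linarith)
  have hs1 : s < 1 := by rw [hs_def]; exact Real.exp_lt_one_iff.2 (by linarith)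
  have hx1 : x < 1 := lt_trans hxs hs1
  -- s - x ≤ γ
  have hsxγ : s - x ≤ γ := by
    have h1 : -γ + 1 ≤ Real.exp (-γ) := Real.add_one_le_exp (-γ)
    have h2 : s * Real.exp (-γ) = x := by
      rw [hs_def, hx_def, ← Real.exp_add]; ring_nf
    nlinarith [Real.exp_pos (-γ)]
  set f : ℕ → ENNReal := fun n => ENNReal.ofReal (Real.exp (γ * (n : ℝ) ^ 2)) with hf_def
  set p : ℕ → ENNReal := fun n => μ {ω | Z ω = n} with hp_def
  have hf1 : ∀ n, 1 ≤ f n := by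
    intro n
    rw [hf_def]
    exact ENNReal.one_le_ofReal.2 (Real.one_le_exp (by positivity))
  -- Step A : the integral equals the sum
  have hmeasf : Measurable f := measurable_from_top
  have hA : ∫⁻ ω, ENNReal.ofReal (Real.exp (γ * (Z ω : ℝ) ^ 2)) ∂μ = ∑' n, f n * p n := by
    have h1 : ∫⁻ ω, ENNReal.ofReal (Real.exp (γ * (Z ω : ℝ) ^ 2)) ∂μ
        = ∫⁻ n, f n ∂(μ.map Z) := (lintegral_map hmeasf hZ).symm
    rw [h1, lintegral_countable']
    refine tsum_congr fun n => ?_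
    rw [Measure.map_apply hZ (MeasurableSet.singleton n)]
    rfl
  -- Step B : ∑' p n = 1
  have hB : ∑' n, p n = 1 := by
    have h1 : (⋃ n : ℕ, {ω | Z ω = n}) = Set.univ := by ext ω; simp
    have h2 : Pairwise (Function.onFun Disjoint fun n : ℕ => {ω | Z ω = n}) := by
      intro i j hij
      refine Set.disjoint_left.2 fun ω hi hj => hij ?_
      simp only [Set.mem_setOf_eq] at hi hj
      rw [← hi, ← hj]
    have h3 : ∀ n : ℕ, MeasurableSet {ω | Z ω = n} := fun n =>
      hZ (MeasurableSet.singleton n)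
    calc ∑' n, p n = μ (⋃ n : ℕ, {ω | Z ω = n}) := (measure_iUnion h2 h3).symm
      _ = 1 := by rw [h1]; exact measure_univ
  -- Step C : split off the constant 1
  have hC : ∑' n, f n * p n = 1 + ∑' n, (f n - 1) * p n := by
    have h1 : ∀ n, f n * p n = p n + (f n - 1) * p n := by
      intro n
      conv_lhs => rw [← tsub_add_cancel_of_le (hf1 n)]
      rw [add_mul, one_mul, add_comm]
    rw [tsum_congr h1, ENNReal.tsum_add, hB]
  -- Step D : pointwise bound
  have hD : ∀ n : ℕ, (f n - 1) * p n ≤ ENNReal.ofReal (s ^ (n ^ 2) - x ^ (n ^ 2)) := by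
    intro n
    rcases Nat.eq_zero_or_pos n with hn | hn
    · subst hn; simp [hf_def]
    · have hpn : p n ≤ ENNReal.ofReal (Real.exp (-α * (n : ℝ) ^ 2)) :=
        calc p n = ENNReal.ofReal ((μ {ω | Z ω = n}).toReal) :=
              (ENNReal.ofReal_toReal (measure_ne_top μ _)).symm
          _ ≤ _ := ENNReal.ofReal_le_ofReal (htail n hn)
      have hnn : (0 : ℝ) ≤ Real.exp (γ * (n : ℝ) ^ 2) - 1 :=
        sub_nonneg.2 (Real.one_le_exp (by positivity))
      have hfn : f n - 1 = ENNReal.ofReal (Real.exp (γ * (n : ℝ) ^ 2) - 1) := by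
        rw [hf_def, ENNReal.ofReal_sub _ zero_le_one, ENNReal.ofReal_one]
      have hmul : (f n - 1) * p n
          ≤ ENNReal.ofReal ((Real.exp (γ * (n : ℝ) ^ 2) - 1) * Real.exp (-α * (n : ℝ) ^ 2)) := by
        rw [ENNReal.ofReal_mul hnn, hfn]
        exact mul_le_mul_right hpn _
      refine hmul.trans (le_of_eq ?_)
      congr 1
      have e1 : Real.exp (γ * (n : ℝ) ^ 2) * Real.exp (-α * (n : ℝ) ^ 2) = s ^ (n ^ 2) := by
        rw [← Real.exp_add, hs_def, ← Real.exp_nat_mul]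
        congr 1; push_cast; ring
      have e2 : Real.exp (-α * (n : ℝ) ^ 2) = x ^ (n ^ 2) := by
        rw [hx_def, ← Real.exp_nat_mul]
        congr 1; push_cast; ring
      rw [sub_mul, one_mul, e1, e2]
  -- Step F : double sum bounded by sum over ℕ × ℕ
  set G : ℕ × ℕ → ENNReal := fun q => ENNReal.ofReal (s ^ q.1 * x ^ q.2) with hG_def
  have hF : ∑' n : ℕ, ∑ j ∈ Finset.range (n ^ 2), ENNReal.ofReal (s ^ j * x ^ (n ^ 2 - 1 - j))
      ≤ ∑' q : ℕ × ℕ, G q := by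
    have h1 : ∀ n : ℕ, ∑ j ∈ Finset.range (n ^ 2), ENNReal.ofReal (s ^ j * x ^ (n ^ 2 - 1 - j))
        = ∑' j : Fin (n ^ 2), G ((j : ℕ), n ^ 2 - 1 - (j : ℕ)) := by
      intro n
      rw [tsum_fintype]
      exact (Fin.sum_univ_eq_sum_range _ _).symm
    calc ∑' n : ℕ, ∑ j ∈ Finset.range (n ^ 2), ENNReal.ofReal (s ^ j * x ^ (n ^ 2 - 1 - j))
        = ∑' (n : ℕ) (j : Fin (n ^ 2)), G ((j : ℕ), n ^ 2 - 1 - (j : ℕ)) := tsum_congr h1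
      _ = ∑' q : Σ n : ℕ, Fin (n ^ 2), G ((q.2 : ℕ), q.1 ^ 2 - 1 - (q.2 : ℕ)) :=
          (ENNReal.tsum_sigma'
            (fun q : Σ n : ℕ, Fin (n ^ 2) => G ((q.2 : ℕ), q.1 ^ 2 - 1 - (q.2 : ℕ)))).symm
      _ ≤ ∑' q : ℕ × ℕ, G q := ENNReal.tsum_comp_le_tsum_of_injective aux_inj G
  -- Step G : compute the product sum
  have hGval : ∑' q : ℕ × ℕ, G q = ENNReal.ofReal ((1 - s)⁻¹ * (1 - x)⁻¹) := by
    have hsum_s : ∑' a : ℕ, ENNReal.ofReal (s ^ a) = ENNReal.ofReal ((1 - s)⁻¹) := by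
      rw [← ENNReal.ofReal_tsum_of_nonneg (fun a => pow_nonneg hs0.le a)
        (summable_geometric_of_lt_one hs0.le hs1), tsum_geometric_of_lt_one hs0.le hs1]
    have hsum_x : ∑' b : ℕ, ENNReal.ofReal (x ^ b) = ENNReal.ofReal ((1 - x)⁻¹) := by
      rw [← ENNReal.ofReal_tsum_of_nonneg (fun b => pow_nonneg hx0.le b)
        (summable_geometric_of_lt_one hx0.le hx1), tsum_geometric_of_lt_one hx0.le hx1]
    calc ∑' q : ℕ × ℕ, G q
        = ∑' (a : ℕ) (b : ℕ), ENNReal.ofReal (s ^ a) * ENNReal.ofReal (x ^ b) := by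
          rw [ENNReal.tsum_prod']
          exact tsum_congr fun a => tsum_congr fun b => by
            rw [hG_def, ← ENNReal.ofReal_mul (pow_nonneg hs0.le a)]
      _ = ENNReal.ofReal ((1 - s)⁻¹) * ENNReal.ofReal ((1 - x)⁻¹) := by
          simp_rw [ENNReal.tsum_mul_left, hsum_x, ENNReal.tsum_mul_right, hsum_s]
      _ = ENNReal.ofReal ((1 - s)⁻¹ * (1 - x)⁻¹) :=
          (ENNReal.ofReal_mul (inv_nonneg.2 (by linarith))).symm
  -- Step E : termwise bound by γ times the double sum
  have hE : ∑' n : ℕ, ENNReal.ofReal (s ^ (n ^ 2) - x ^ (n ^ 2))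
      ≤ ENNReal.ofReal γ * ∑' n : ℕ, ∑ j ∈ Finset.range (n ^ 2),
          ENNReal.ofReal (s ^ j * x ^ (n ^ 2 - 1 - j)) := by
    rw [← ENNReal.tsum_mul_left]
    refine ENNReal.tsum_le_tsum fun n => ?_
    calc ENNReal.ofReal (s ^ (n ^ 2) - x ^ (n ^ 2))
        ≤ ENNReal.ofReal (γ * ∑ j ∈ Finset.range (n ^ 2), s ^ j * x ^ (n ^ 2 - 1 - j)) :=
          ENNReal.ofReal_le_ofReal (aux_geom_bound hx0.le hs0.le hsxγ (n ^ 2))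
      _ = ENNReal.ofReal γ * ENNReal.ofReal (∑ j ∈ Finset.range (n ^ 2),
            s ^ j * x ^ (n ^ 2 - 1 - j)) := ENNReal.ofReal_mul hγ0.le
      _ = ENNReal.ofReal γ * ∑ j ∈ Finset.range (n ^ 2),
            ENNReal.ofReal (s ^ j * x ^ (n ^ 2 - 1 - j)) := by
          rw [ENNReal.ofReal_sum_of_nonneg fun j _ => by positivity]
  -- Assemble
  have hc0 : (0 : ℝ) ≤ γ * ((1 - s)⁻¹ * (1 - x)⁻¹) := by
    have : (0:ℝ) < 1 - s := by linarith
    have : (0:ℝ) < 1 - x := by linarith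
    positivity
  calc ∫⁻ ω, ENNReal.ofReal (Real.exp (γ * (Z ω : ℝ) ^ 2)) ∂μ
      = 1 + ∑' n, (f n - 1) * p n := by rw [hA, hC]
    _ ≤ 1 + ∑' n : ℕ, ENNReal.ofReal (s ^ (n ^ 2) - x ^ (n ^ 2)) :=
        add_le_add_right (ENNReal.tsum_le_tsum hD) 1
    _ ≤ 1 + ENNReal.ofReal γ * ∑' n : ℕ, ∑ j ∈ Finset.range (n ^ 2),
          ENNReal.ofReal (s ^ j * x ^ (n ^ 2 - 1 - j)) := add_le_add_right hE 1
    _ ≤ 1 + ENNReal.ofReal γ * ENNReal.ofReal ((1 - s)⁻¹ * (1 - x)⁻¹) :=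
        add_le_add_right (mul_le_mul_right (hF.trans hGval.le) _) 1
    _ = ENNReal.ofReal (1 + γ * ((1 - s)⁻¹ * (1 - x)⁻¹)) := by
        rw [← ENNReal.ofReal_mul hγ0.le, ← ENNReal.ofReal_one,
          ← ENNReal.ofReal_add zero_le_one hc0]
    _ ≤ ENNReal.ofReal (Real.exp (γ / ((1 - s) * (1 - x)))) := by
        refine ENNReal.ofReal_le_ofReal ?_
        have he : γ * ((1 - s)⁻¹ * (1 - x)⁻¹) = γ / ((1 - s) * (1 - x)) := by
          rw [div_eq_mul_inv, mul_inv]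
        have := Real.add_one_le_exp (γ / ((1 - s) * (1 - x)))
        linarith [he ▸ this]
end

section
/- Let k ≥ 1 be an integer, C₀ > 0, and let I ⊂ ℝ be an interval of length |I| ≤ 1. Let Π : ℝ × ℝ → ℂ be a kernel such that for every x ∈ I the function y ↦ Π(x,y) is (k−1)-times continuously differentiable on I, and such that |∂_y^j Π(x,y)| ≤ C₀^j · j! for all x, y ∈ I and all 0 ≤ j ≤ k−1. Then for all points x₁,…,x_k ∈ I: |det (Π(x_i, x_j))_{i,j=1,…,k}| ≤ k! · ((1+2C₀)·|I|)^{k(k−1)/2}. -/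
open MeasureTheory

open Polynomial Finset Set

namespace Stmt9Aux

lemma iteratedDerivWithin_polyeval {𝕜 : Type*} [NontriviallyNormedField 𝕜] (p : 𝕜[X])
    (s : Set 𝕜) (hs : UniqueDiffOn 𝕜 s) (n : ℕ) :
    ∀ x ∈ s, iteratedDerivWithin n (fun t => p.eval t) s x = (derivative^[n] p).eval x := by
  induction n generalizing p with
  | zero => intro x hx; simp
  | succ n ih =>
    intro x hx
    rw [iteratedDerivWithin_succ']
    have h1 : Set.EqOn (derivWithin (fun t => p.eval t) s) (fun t => (derivative p).eval t) s :=
      fun t ht => p.derivWithin (hs t ht)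
    have := iteratedDerivWithin_congr h1 (n := n) hx
    rw [this, ih (derivative p) x hx, ← Function.iterate_succ_apply]

lemma iterate_derivative_eq_C {F : Type*} [CommRing F] (p : F[X]) (m : ℕ) (hp : p.natDegree ≤ m) :
    derivative^[m] p = C ((m.factorial : F) * p.coeff m) := by
  have hd : (derivative^[m] p).natDegree = 0 := by
    have := Polynomial.natDegree_iterate_derivative p m
    omega
  have := Polynomial.eq_C_of_natDegree_le_zero hd.le
  rw [this, Polynomial.coeff_iterate_derivative]
  simp [Nat.descFactorial_self, nsmul_eq_mul]



lemma rolle_iter (a b : ℝ) (n : ℕ) :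
    ∀ (g : ℝ → ℝ), ContDiffOn ℝ n g (Set.Icc a b) →
    ∀ (y : ℕ → ℝ), (∀ i < n, y i < y (i+1)) → (∀ i ≤ n, y i ∈ Set.Icc a b) →
    (∀ i ≤ n, g (y i) = 0) →
    ∃ ξ ∈ Set.Icc a b, iteratedDerivWithin n g (Set.Icc a b) ξ = 0 := by
  induction n with
  | zero =>
    intro g _ y _ hmem hz
    exact ⟨y 0, hmem 0 le_rfl, by simpa using hz 0 le_rfl⟩
  | succ n ih =>
    intro g hg y hlt hmem hz
    have hab : a < b :=
      lt_of_lt_of_le (lt_of_le_of_lt (hmem 0 (by omega)).1 (hlt 0 (by omega)))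
        (hmem 1 (by omega)).2
    have hud : UniqueDiffOn ℝ (Set.Icc a b) := uniqueDiffOn_Icc hab
    have hstep : ∀ i : ℕ, ∃ c : ℝ, i ≤ n →
        c ∈ Set.Ioo (y i) (y (i+1)) ∧ derivWithin g (Set.Icc a b) c = 0 := by
      intro i
      by_cases hi : i ≤ n
      · have h1 : y i < y (i+1) := hlt i (by omega)
        have hcont : ContinuousOn g (Set.Icc (y i) (y (i+1))) :=
          (hg.continuousOn).mono
            (Set.Icc_subset_Icc (hmem i (by omega)).1 (hmem (i+1) (by omega)).2)
        have heq : g (y i) = g (y (i+1)) := by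
          rw [hz i (by omega), hz (i+1) (by omega)]
        obtain ⟨c, hc, hc0⟩ := exists_deriv_eq_zero h1 hcont heq
        refine ⟨c, fun _ => ⟨hc, ?_⟩⟩
        have hnb : Set.Icc a b ∈ nhds c :=
          Icc_mem_nhds (lt_of_le_of_lt (hmem i (by omega)).1 hc.1)
            (lt_of_lt_of_le hc.2 (hmem (i+1) (by omega)).2)
        rw [derivWithin_of_mem_nhds hnb]
        exact hc0
      · exact ⟨0, fun h => absurd h hi⟩
    choose c hc using hstep
    have key : ∃ ξ ∈ Set.Icc a b,
        iteratedDerivWithin n (derivWithin g (Set.Icc a b)) (Set.Icc a b) ξ = 0 := by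
      apply ih (derivWithin g (Set.Icc a b))
        (hg.derivWithin hud (by exact_mod_cast le_refl (n+1))) c
      · intro i hi
        have h1 := (hc i (by omega)).1.2
        have h2 := (hc (i+1) (by omega)).1.1
        have h3 := hlt (i+1) (by omega)
        linarith [h1.trans h3, h2]
      · intro i hi
        have h := (hc i hi).1
        exact ⟨le_of_lt (lt_of_le_of_lt (hmem i (by omega)).1 h.1),
          le_of_lt (lt_of_lt_of_le h.2 (hmem (i+1) (by omega)).2)⟩
      · intro i hi; exact (hc i hi).2
    obtain ⟨ξ, hξ, h0⟩ := key
    exact ⟨ξ, hξ, by rw [iteratedDerivWithin_succ']; exact h0⟩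

lemma contDiff_polyeval {𝕜 : Type*} [NontriviallyNormedField 𝕜] (p : 𝕜[X]) {n : ℕ∞} :
    ContDiff 𝕜 n fun t => p.eval t := by
  induction p using Polynomial.induction_on' with
  | add p q hp hq => simpa using hp.add hq
  | monomial k c =>
    simpa [Polynomial.eval_monomial] using (contDiff_const (c := c)).mul (contDiff_id.pow k)

lemma leadingCoeff_basis {F : Type*} [Field F] {ι : Type*} [DecidableEq ι] {s : Finset ι}
    {v : ι → F} (hvs : Set.InjOn v s) {i : ι} (hi : i ∈ s) :
    (Lagrange.basis s v i).coeff (#s - 1) = (∏ j ∈ s.erase i, (v i - v j))⁻¹ := by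
  have h := Lagrange.natDegree_basis hvs hi
  rw [← h, Polynomial.coeff_natDegree, Lagrange.basis, Polynomial.leadingCoeff_prod,
    ← Finset.prod_inv_distrib]
  refine Finset.prod_congr rfl fun j hj => ?_
  have hne : v i ≠ v j := by
    rcases Finset.mem_erase.mp hj with ⟨hij, hjs⟩
    exact fun hv => hij.symm (hvs hi hjs hv)
  rw [Lagrange.basisDivisor, Polynomial.leadingCoeff_mul, Polynomial.leadingCoeff_C,
    Polynomial.leadingCoeff_X_sub_C, mul_one]

lemma interpolate_topCoeff {F : Type*} [Field F] {ι : Type*} [DecidableEq ι] {s : Finset ι}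
    {v : ι → F} (hvs : Set.InjOn v s) (r : ι → F) :
    (Lagrange.interpolate s v r).coeff (#s - 1) =
      ∑ i ∈ s, r i * (∏ j ∈ s.erase i, (v i - v j))⁻¹ := by
  rw [Lagrange.interpolate_apply, Polynomial.finset_sum_coeff]
  exact Finset.sum_congr rfl fun i hi => by
    rw [Polynomial.coeff_C_mul, leadingCoeff_basis hvs hi]

lemma chain_lt {m : ℕ} {y : ℕ → ℝ} (hy : ∀ i < m, y i < y (i+1)) :
    ∀ j ≤ m, ∀ i < j, y i < y j := by
  intro j hj
  induction j with
  | zero => omega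
  | succ j ihj =>
    intro i hi
    rcases Nat.lt_succ_iff_lt_or_eq.mp hi with h | h
    · exact (ihj (by omega) i h).trans (hy j (by omega))
    · subst h; exact hy i (by omega)

lemma injOn_of_chain {m : ℕ} {y : ℕ → ℝ} (hy : ∀ i < m, y i < y (i+1)) :
    Set.InjOn y (Finset.range (m+1)) := by
  intro i hi j hj hij
  simp only [Finset.coe_range, Set.mem_Iio] at hi hj
  rcases lt_trichotomy i j with h | h | h
  · exact absurd hij (ne_of_lt (chain_lt hy j (by omega) i h))
  · exact h
  · exact absurd hij.symm (ne_of_lt (chain_lt hy i (by omega) j h))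

lemma dd_bound_real (a b : ℝ) (m : ℕ) (g : ℝ → ℝ) (hg : ContDiffOn ℝ m g (Set.Icc a b))
    (y : ℕ → ℝ) (hy : ∀ i < m, y i < y (i+1)) (hmem : ∀ i ≤ m, y i ∈ Set.Icc a b)
    (Cb : ℝ)
    (hCb : ∀ t ∈ Set.Icc a b, |iteratedDerivWithin m g (Set.Icc a b) t| ≤ Cb * m.factorial) :
    |(Lagrange.interpolate (Finset.range (m+1)) y (fun n => g (y n))).coeff m| ≤ Cb := by
  have hinj : Set.InjOn y (Finset.range (m+1)) := injOn_of_chain hy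
  rcases Nat.eq_zero_or_pos m with hm | hm
  · subst hm
    have h0 : (Finset.range 1) = ({0} : Finset ℕ) := rfl
    rw [h0, Lagrange.interpolate_singleton, Polynomial.coeff_C_zero]
    simpa using hCb (y 0) (hmem 0 le_rfl)
  · have hab : a < b :=
      lt_of_lt_of_le (lt_of_le_of_lt (hmem 0 (by omega)).1 (hy 0 (by omega)))
        (hmem 1 (by omega)).2
    have hud : UniqueDiffOn ℝ (Set.Icc a b) := uniqueDiffOn_Icc hab
    set p : Polynomial ℝ := Lagrange.interpolate (Finset.range (m+1)) y (fun n => g (y n))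
      with hp
    have hpdeg : p.natDegree ≤ m := by
      have := Lagrange.degree_interpolate_lt (r := fun n => g (y n)) hinj
      rw [Finset.card_range] at this
      by_cases hp0 : p = 0
      · simp [hp0]
      · have := (Polynomial.natDegree_lt_iff_degree_lt hp0).mpr (by exact_mod_cast this)
        omega
    set e : ℝ → ℝ := fun t => g t - p.eval t with he
    have hec : ContDiffOn ℝ m e (Set.Icc a b) := hg.sub ((contDiff_polyeval p).contDiffOn)
    have hz : ∀ i ≤ m, e (y i) = 0 := by
      intro i hi
      have hnode : p.eval (y i) = g (y i) :=
        Lagrange.eval_interpolate_at_node (fun n => g (y n)) hinj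
          (Finset.mem_range.mpr (by omega))
      simp [he, hnode]
    obtain ⟨ξ, hξ, h0⟩ := rolle_iter a b m e hec y hy hmem hz
    have hpoly : iteratedDerivWithin m (fun t => p.eval t) (Set.Icc a b) ξ =
        (m.factorial : ℝ) * p.coeff m := by
      rw [iteratedDerivWithin_polyeval p _ hud m ξ hξ, iterate_derivative_eq_C p m hpdeg,
        Polynomial.eval_C]
    have hfun : (e + fun t => p.eval t) = g := by funext t; simp [he]
    have hadd : iteratedDerivWithin m g (Set.Icc a b) ξ = (m.factorial : ℝ) * p.coeff m := by
      rw [← hfun, iteratedDerivWithin_add hξ hud (hec ξ hξ) ((contDiff_polyeval p).contDiffOn ξ hξ), h0,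
        zero_add, hpoly]
    have hb := hCb ξ hξ
    rw [hadd, abs_mul, Nat.abs_cast] at hb
    have hfpos : (0:ℝ) < m.factorial := by positivity
    rw [mul_comm] at hb
    exact le_of_mul_le_mul_right hb hfpos

lemma clm_comp_iteratedDerivWithin (φ : ℂ →L[ℝ] ℝ) (m : ℕ) (f : ℝ → ℂ) (s : Set ℝ)
    (hs : UniqueDiffOn ℝ s) (hf : ContDiffOn ℝ m f s) (t : ℝ) (ht : t ∈ s) :
    iteratedDerivWithin m (fun u => φ (f u)) s t = φ (iteratedDerivWithin m f s t) := by
  have h := φ.iteratedFDerivWithin_comp_left (hf t ht) hs ht (by exact_mod_cast le_rfl)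
  rw [iteratedDerivWithin_eq_iteratedFDerivWithin, iteratedDerivWithin_eq_iteratedFDerivWithin]
  have : (fun u => φ (f u)) = ⇑φ ∘ f := rfl
  rw [this, h]
  rfl

lemma dd_bound_complex (a b : ℝ) (m : ℕ) (f : ℝ → ℂ) (hf : ContDiffOn ℝ m f (Set.Icc a b))
    (y : ℕ → ℝ) (hy : ∀ i < m, y i < y (i+1)) (hmem : ∀ i ≤ m, y i ∈ Set.Icc a b)
    (Cb : ℝ)
    (hCb : ∀ t ∈ Set.Icc a b,
      ‖iteratedDerivWithin m f (Set.Icc a b) t‖ ≤ Cb * m.factorial) :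
    ‖(Lagrange.interpolate (Finset.range (m+1)) (fun n => ((y n : ℝ) : ℂ))
      (fun n => f (y n))).coeff m‖ ≤ 2 * Cb := by
  have hinj : Set.InjOn y (Finset.range (m+1)) := injOn_of_chain hy
  have hinjC : Set.InjOn (fun n => ((y n : ℝ) : ℂ)) (Finset.range (m+1)) :=
    fun i hi j hj hij => hinj hi hj (Complex.ofReal_inj.mp (by simpa using hij))
  have hcard : #(Finset.range (m+1)) - 1 = m := by simp
  -- the complex top coefficient as a sum with real weights
  have htopC := interpolate_topCoeff hinjC (fun n => f (y n))
  rw [hcard] at htopC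
  have hw : ∀ i ∈ Finset.range (m+1),
      (∏ j ∈ (Finset.range (m+1)).erase i, ((y i : ℂ) - (y j : ℂ)))⁻¹ =
      (((∏ j ∈ (Finset.range (m+1)).erase i, (y i - y j))⁻¹ : ℝ) : ℂ) := by
    intro i _
    push_cast
    rfl
  -- real and imaginary parts
  have hre : ((Lagrange.interpolate (Finset.range (m+1)) (fun n => ((y n : ℝ) : ℂ))
      (fun n => f (y n))).coeff m).re =
      (Lagrange.interpolate (Finset.range (m+1)) y (fun n => (f (y n)).re)).coeff m := by
    have t2 := interpolate_topCoeff hinj (fun n => (f (y n)).re)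
    rw [hcard] at t2
    rw [htopC, t2, Complex.re_sum]
    refine Finset.sum_congr rfl fun i hi => ?_
    rw [hw i hi, Complex.mul_re, Complex.ofReal_re, Complex.ofReal_im, mul_zero, sub_zero]
  have him : ((Lagrange.interpolate (Finset.range (m+1)) (fun n => ((y n : ℝ) : ℂ))
      (fun n => f (y n))).coeff m).im =
      (Lagrange.interpolate (Finset.range (m+1)) y (fun n => (f (y n)).im)).coeff m := by
    have t2 := interpolate_topCoeff hinj (fun n => (f (y n)).im)
    rw [hcard] at t2
    rw [htopC, t2, Complex.im_sum]
    refine Finset.sum_congr rfl fun i hi => ?_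
    rw [hw i hi, Complex.mul_im, Complex.ofReal_re, Complex.ofReal_im, mul_zero, zero_add]
  -- bounds on the real and imaginary interpolation coefficients
  have hbnd : ∀ (φ : ℂ →L[ℝ] ℝ), (∀ w : ℂ, |φ w| ≤ ‖w‖) →
      |(Lagrange.interpolate (Finset.range (m+1)) y (fun n => φ (f (y n)))).coeff m| ≤ Cb := by
    intro φ hφ
    refine dd_bound_real a b m (fun u => φ (f u))
      (φ.contDiff.comp_contDiffOn hf) y hy hmem Cb ?_
    intro t ht
    rcases Nat.eq_zero_or_pos m with hm | hm
    · subst hm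
      simp only [iteratedDerivWithin_zero]
      simpa using (hφ (f t)).trans (by simpa using hCb t ht)
    · have hab : a < b :=
        lt_of_lt_of_le (lt_of_le_of_lt (hmem 0 (by omega)).1 (hy 0 (by omega)))
          (hmem 1 (by omega)).2
      rw [clm_comp_iteratedDerivWithin φ m f _ (uniqueDiffOn_Icc hab) hf t ht]
      exact (hφ _).trans (hCb t ht)
  have h1 := hbnd Complex.reCLM (fun w => by simpa using Complex.abs_re_le_norm w)
  have h2 := hbnd Complex.imCLM (fun w => by simpa using Complex.abs_im_le_norm w)
  calc ‖_‖ ≤ |_| + |_| := Complex.norm_le_abs_re_add_abs_im _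
  _ ≤ Cb + Cb := by rw [hre, him] at *; exact add_le_add h1 h2
  _ = 2 * Cb := by ring

lemma newton {F : Type*} [Field F] (v r : ℕ → F) :
    ∀ (m : ℕ), Set.InjOn v (Finset.range (m+1)) →
    Lagrange.interpolate (Finset.range (m+1)) v r =
      ∑ n ∈ Finset.range (m+1),
        C ((Lagrange.interpolate (Finset.range (n+1)) v r).coeff n) *
          ∏ l ∈ Finset.range n, (X - C (v l)) := by
  intro m
  induction m with
  | zero =>
    intro _
    have h0 : (Finset.range 1) = ({0} : Finset ℕ) := rfl
    simp [h0, Lagrange.interpolate_singleton]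
  | succ m ih =>
    intro hinj
    have hsub : (Finset.range (m+1) : Set ℕ) ⊆ (Finset.range (m+2) : Set ℕ) := by
      intro t ht
      simp only [Finset.coe_range, Set.mem_Iio] at *
      omega
    have hinj' : Set.InjOn v (Finset.range (m+1)) := hinj.mono hsub
    set D : F[X] := Lagrange.interpolate (Finset.range (m+2)) v r -
      Lagrange.interpolate (Finset.range (m+1)) v r with hD
    set P : F[X] := ∏ l ∈ Finset.range (m+1), (X - C (v l)) with hP
    have hPmonic : P.Monic := monic_prod_of_monic _ _ fun l _ => monic_X_sub_C (v l)
    have hPdeg : P.natDegree = m + 1 := by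
      rw [hP, natDegree_prod _ _ fun l _ => X_sub_C_ne_zero (v l)]
      simp [natDegree_X_sub_C]
    have hDdeg : D.degree < ((m + 2 : ℕ) : WithBot ℕ) := by
      apply lt_of_le_of_lt (degree_sub_le _ _)
      rw [max_lt_iff]
      constructor
      · have := Lagrange.degree_interpolate_lt (r := r) hinj; rw [Finset.card_range] at this; exact this
      · exact lt_of_lt_of_le (by simpa using Lagrange.degree_interpolate_lt (r := r) hinj')
          (by exact_mod_cast Nat.le_succ (m+1) : ((m+1:ℕ) : WithBot ℕ) ≤ ((m+2:ℕ) : WithBot ℕ))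
    have hCPdeg : (C (D.coeff (m+1)) * P).degree ≤ ((m + 1 : ℕ) : WithBot ℕ) := by
      apply le_trans (degree_mul_le _ _)
      apply le_trans (add_le_add degree_C_le (degree_le_natDegree))
      simp [hPdeg]
    have hE : D - C (D.coeff (m+1)) * P = 0 := by
      apply Polynomial.eq_zero_of_degree_lt_of_eval_index_eq_zero (s := Finset.range (m+1))
        hinj'
      · rw [Finset.card_range]
        rw [degree_lt_iff_coeff_zero]
        intro j hj
        rcases Nat.lt_or_ge j (m+2) with h | h
        · have hj1 : j = m + 1 := by omega
          subst hj1
          rw [coeff_sub, coeff_C_mul]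
          have : P.coeff (m+1) = 1 := by
            have := hPmonic.leadingCoeff
            rwa [leadingCoeff, hPdeg] at this
          rw [this, mul_one, sub_self]
        · rw [coeff_sub, coeff_C_mul]
          have h1 : D.coeff j = 0 := coeff_eq_zero_of_degree_lt
            (lt_of_lt_of_le hDdeg (by exact_mod_cast h))
          have h2 : P.coeff j = 0 := coeff_eq_zero_of_degree_lt
            (lt_of_le_of_lt degree_le_natDegree (by rw [hPdeg]; exact_mod_cast (by omega : m + 1 < j)))
          rw [h1, h2, mul_zero, sub_self]
      · intro i hi
        have hi2 : i ∈ Finset.range (m+2) := by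
          simp only [Finset.mem_range] at *
          omega
        rw [eval_sub, eval_sub, Lagrange.eval_interpolate_at_node r hinj hi2,
          Lagrange.eval_interpolate_at_node r hinj' hi, sub_self, eval_mul, hP, eval_prod]
        rw [Finset.prod_eq_zero hi (by simp), mul_zero, sub_zero]
    have hkey : Lagrange.interpolate (Finset.range (m+2)) v r =
        Lagrange.interpolate (Finset.range (m+1)) v r + C (D.coeff (m+1)) * P := by
      have := sub_eq_zero.mp hE
      rw [hD] at this
      linear_combination (this : _)
    have hcoeff : D.coeff (m+1) =
        (Lagrange.interpolate (Finset.range (m+2)) v r).coeff (m+1) := by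
      rw [hD, coeff_sub]
      have : (Lagrange.interpolate (Finset.range (m+1)) v r).coeff (m+1) = 0 :=
        coeff_eq_zero_of_degree_lt (by simpa using Lagrange.degree_interpolate_lt (r := r) hinj')
      rw [this, sub_zero]
    rw [hkey, ih hinj', hcoeff, hP, Finset.sum_range_succ (n := m+1)]

end Stmt9Aux


open Stmt9Aux in
/-- determinant bound for a kernel with factorially bounded derivatives in the
second variable on an interval `I = [a,b]` of length at most `1`:
`|det (Π(x_i,x_j))| ≤ k!·((1+2C₀)|I|)^{k(k−1)/2}`. -/
theorem stmt_9 (k : ℕ) (hk : 1 ≤ k) (C₀ : ℝ) (hC₀ : 0 < C₀)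
    (a b : ℝ) (hab : a ≤ b) (hlen : b - a ≤ 1) (K : ℝ → ℝ → ℂ)
    (hsmooth : ∀ x ∈ Set.Icc a b,
      ContDiffOn ℝ (k - 1 : ℕ) (fun y => K x y) (Set.Icc a b))
    (hbound : ∀ x ∈ Set.Icc a b, ∀ y ∈ Set.Icc a b, ∀ j : ℕ, j ≤ k - 1 →
      ‖iteratedDerivWithin j (fun y => K x y) (Set.Icc a b) y‖ ≤
        C₀ ^ j * (j.factorial : ℝ))
    (x : Fin k → ℝ) (hx : ∀ i, x i ∈ Set.Icc a b) :
    ‖Matrix.det (Matrix.of fun i j => K (x i) (x j))‖ ≤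
      (k.factorial : ℝ) * ((1 + 2 * C₀) * (b - a)) ^ (k * (k - 1) / 2) := by

  classical
  have hIcc : (0:ℝ) ≤ b - a := by linarith
  have hbase : (0:ℝ) ≤ (1 + 2*C₀) * (b - a) := by
    apply mul_nonneg (by linarith) hIcc
  by_cases hinj : Function.Injective x
  swap
  · simp only [Function.Injective] at hinj
    push_neg at hinj
    obtain ⟨i, j, hij, hne⟩ := hinj
    have hdz : Matrix.det (Matrix.of fun i j => K (x i) (x j)) = 0 :=
      Matrix.det_zero_of_row_eq hne (by funext jj; simp [hij])
    rw [hdz]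
    simp only [norm_zero]
    positivity
  obtain ⟨k', rfl⟩ : ∃ k', k = k' + 1 := ⟨k - 1, by omega⟩
  have hk1 : k' + 1 - 1 = k' := rfl
  set σ := Tuple.sort x with hσ
  set z : Fin (k'+1) → ℝ := x ∘ σ with hzdef
  have hzmono : StrictMono z :=
    (Tuple.monotone_sort x).strictMono_of_injective (hinj.comp σ.injective)
  have hzmem : ∀ i, z i ∈ Set.Icc a b := fun i => hx _
  have hdet0 : Matrix.det (Matrix.of fun i j => K (x i) (x j)) =
      Matrix.det (Matrix.of fun i j => K (z i) (z j)) := by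
    rw [← Matrix.det_submatrix_equiv_self σ (Matrix.of fun i j => K (x i) (x j))]
    rfl
  set y : ℕ → ℝ := fun n => if h : n < k' + 1 then z ⟨n, h⟩ else b + 1 + n with hydef
  have hyz : ∀ (i : Fin (k'+1)), y (i:ℕ) = z i := by
    intro i
    simp only [hydef, i.isLt, dif_pos, Fin.eta]
  have hychain : ∀ i < k', y i < y (i+1) := by
    intro i hi
    have h1 : y i = z ⟨i, by omega⟩ := by simp only [hydef, dif_pos (show i < k'+1 by omega)]
    have h2 : y (i+1) = z ⟨i+1, by omega⟩ := by
      simp only [hydef, dif_pos (show i+1 < k'+1 by omega)]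
    rw [h1, h2]
    exact hzmono (by simp [Fin.lt_def])
  have hymem : ∀ i ≤ k', y i ∈ Set.Icc a b := by
    intro i hi
    have h1 : y i = z ⟨i, by omega⟩ := by simp only [hydef, dif_pos (show i < k'+1 by omega)]
    rw [h1]; exact hzmem _
  set v : ℕ → ℂ := fun n => ((y n : ℝ) : ℂ) with hvdef
  have hyinj : Set.InjOn y (Finset.range (k'+1)) := injOn_of_chain hychain
  have hvinj : Set.InjOn v (Finset.range (k'+1)) :=
    fun i hi j hj hij => hyinj hi hj (Complex.ofReal_inj.mp (by simpa [hvdef] using hij))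
  set N : Matrix (Fin (k'+1)) (Fin (k'+1)) ℂ := Matrix.of fun i m =>
    (Lagrange.interpolate (Finset.range ((m:ℕ)+1)) v (fun n => K (z i) (y n))).coeff (m:ℕ)
    with hN
  set U : Matrix (Fin (k'+1)) (Fin (k'+1)) ℂ := Matrix.of fun m j =>
    ∏ l ∈ Finset.range (m:ℕ), (((z j : ℝ) : ℂ) - v l) with hU
  have hvz : ∀ (j : Fin (k'+1)), v (j:ℕ) = ((z j : ℝ) : ℂ) := by
    intro j; simp only [hvdef]; rw [hyz j]
  have hMNU : (Matrix.of fun i j => K (z i) (z j)) = N * U := by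
    ext i j
    rw [Matrix.mul_apply]
    have hR : ∑ m : Fin (k'+1), N i m * U m j
        = ∑ n ∈ Finset.range (k'+1),
            ((Lagrange.interpolate (Finset.range (n+1)) v (fun n => K (z i) (y n))).coeff n)
              * ∏ l ∈ Finset.range n, (((z j : ℝ) : ℂ) - v l) :=
      Fin.sum_univ_eq_sum_range
        (fun n => ((Lagrange.interpolate (Finset.range (n+1)) v
          (fun n => K (z i) (y n))).coeff n)
            * ∏ l ∈ Finset.range n, (((z j : ℝ) : ℂ) - v l)) (k'+1)
    rw [hR]
    have hnode := Lagrange.eval_interpolate_at_node (v := v)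
      (fun n => K (z i) (y n)) hvinj (Finset.mem_range.mpr j.isLt)
    have hNewt := newton v (fun n => K (z i) (y n)) k' hvinj
    have e1 : K (z i) (z j) = Polynomial.eval (((z j : ℝ) : ℂ))
        (Lagrange.interpolate (Finset.range (k'+1)) v (fun n => K (z i) (y n))) := by
      rw [← hvz j, hnode]
      show K (z i) (z j) = K (z i) (y (j:ℕ))
      rw [hyz j]
    show K (z i) (z j) = _
    rw [e1, hNewt, Polynomial.eval_finset_sum]
    refine Finset.sum_congr rfl fun n hn => ?_
    rw [Polynomial.eval_mul, Polynomial.eval_C, Polynomial.eval_prod]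
    congr 1
    refine Finset.prod_congr rfl fun l hl => ?_
    rw [Polynomial.eval_sub, Polynomial.eval_X, Polynomial.eval_C]
  have hUtri : ∀ (m j : Fin (k'+1)), j < m → U m j = 0 := by
    intro m j hjm
    apply Finset.prod_eq_zero (Finset.mem_range.mpr (show (j:ℕ) < (m:ℕ) from hjm))
    rw [hvz j]
    ring
  have hdetU : U.det = ∏ m, U m m :=
    Matrix.det_of_upperTriangular (fun i j h => hUtri i j h)
  set S : ℕ := ∑ m ∈ Finset.range (k'+1), m with hS
  set cb : ℕ → ℝ := fun n => if n = 0 then 1 else 2 * C₀^n with hcb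
  have hNb : ∀ (i m : Fin (k'+1)), ‖N i m‖ ≤ cb (m:ℕ) := by
    intro i m
    have hmle : (m:ℕ) ≤ k' := by omega
    have hfs : ContDiffOn ℝ ((m:ℕ) : ℕ∞) (fun t => K (z i) t) (Set.Icc a b) := by
      have h := hsmooth (z i) (hzmem i)
      rw [hk1] at h
      exact h.of_le (by exact_mod_cast hmle)
    have hbnd : ∀ t ∈ Set.Icc a b,
        ‖iteratedDerivWithin (m:ℕ) (fun t => K (z i) t) (Set.Icc a b) t‖
          ≤ C₀^(m:ℕ) * (((m:ℕ)).factorial : ℝ) := by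
      intro t ht
      exact hbound (z i) (hzmem i) t ht (m:ℕ) (by omega)
    rcases Nat.eq_zero_or_pos (m:ℕ) with h0 | h0
    · have hzero : N i m = K (z i) (y 0) := by
        show (Lagrange.interpolate (Finset.range ((m:ℕ)+1)) v
          (fun n => K (z i) (y n))).coeff (m:ℕ) = _
        rw [h0]
        have h1 : (Finset.range 1) = ({0} : Finset ℕ) := rfl
        rw [h1, Lagrange.interpolate_singleton, Polynomial.coeff_C_zero]
      have hb0 := hbound (z i) (hzmem i) (y 0) (hymem 0 (by omega)) 0 (by omega)
      simp only [iteratedDerivWithin_zero, pow_zero, Nat.factorial_zero, Nat.cast_one,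
        one_mul] at hb0
      rw [hzero]
      simp only [hcb, h0, if_pos]
      exact hb0
    · have hdd := dd_bound_complex a b (m:ℕ) (fun t => K (z i) t) hfs y
        (fun n hn => hychain n (by omega)) (fun n hn => hymem n (by omega))
        (C₀^(m:ℕ)) hbnd
      have : cb (m:ℕ) = 2 * C₀^(m:ℕ) := by simp only [hcb]; rw [if_neg (by omega)]
      rw [this]
      exact hdd
  have hdetN : ‖N.det‖ ≤ ((k'+1).factorial : ℝ) * ∏ m : Fin (k'+1), cb (m:ℕ) := by
    rw [Matrix.det_apply]
    refine le_trans (norm_sum_le _ _) ?_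
    have hterm : ∀ τ : Equiv.Perm (Fin (k'+1)),
        ‖Equiv.Perm.sign τ • ∏ l, N (τ l) l‖ ≤ ∏ m : Fin (k'+1), cb (m:ℕ) := by
      intro τ
      have habs : ‖Equiv.Perm.sign τ • ∏ l, N (τ l) l‖
          = ‖∏ l, N (τ l) l‖ := by
        rcases Int.units_eq_one_or (Equiv.Perm.sign τ) with h | h <;> simp [h]
      rw [habs, norm_prod]
      exact Finset.prod_le_prod (fun _ _ => norm_nonneg _) (fun m _ => hNb _ m)
    refine le_trans (Finset.sum_le_sum fun τ _ => hterm τ) ?_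
    rw [Finset.sum_const, nsmul_eq_mul]
    apply le_of_eq
    congr 1
    simp [Fintype.card_perm]
  have hprodcb : ∏ m : Fin (k'+1), cb (m:ℕ) = 2^k' * C₀^S := by
    have hcb0 : cb 0 = 1 := by simp [hcb]
    have hcbs : ∀ n : ℕ, cb (n+1) = 2 * C₀^(n+1) := fun n => by simp [hcb]
    rw [Fin.prod_univ_eq_prod_range (fun n => cb n) (k'+1), Finset.prod_range_succ',
      hcb0, mul_one, Finset.prod_congr rfl (fun i _ => hcbs i),
      Finset.prod_mul_distrib, Finset.prod_const, Finset.prod_pow_eq_pow_sum]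
    congr 1
    · rw [Finset.card_range]
    · rw [hS, Finset.sum_range_succ' (fun i => i) k']
      simp
  have hdetUb : ‖U.det‖ ≤ (b - a)^S := by
    rw [hdetU, norm_prod]
    have h1 : ∀ m : Fin (k'+1), ‖U m m‖ ≤ (b-a)^(m:ℕ) := by
      intro m
      show ‖∏ l ∈ Finset.range (m:ℕ), (((z m : ℝ) : ℂ) - v l)‖ ≤ _
      rw [norm_prod]
      calc ∏ l ∈ Finset.range (m:ℕ), ‖((z m : ℝ) : ℂ) - v l‖
          ≤ ∏ l ∈ Finset.range (m:ℕ), (b-a) := by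
            refine Finset.prod_le_prod (fun _ _ => norm_nonneg _) fun l hl => ?_
            have hl' : l < (m:ℕ) := Finset.mem_range.mp hl
            have hvl : v l = ((z ⟨l, by omega⟩ : ℝ) : ℂ) := hvz ⟨l, by omega⟩
            rw [hvl, ← Complex.ofReal_sub, Complex.norm_real, Real.norm_eq_abs,
              abs_of_nonneg (sub_nonneg.mpr (hzmono.monotone (by
                simp [Fin.le_def]; omega)))]
            have h2 := (hzmem m).2
            have h3 := (hzmem ⟨l, by omega⟩).1
            linarith
      _ = (b-a)^(m:ℕ) := by rw [Finset.prod_const, Finset.card_range]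
    calc ∏ m : Fin (k'+1), ‖U m m‖ ≤ ∏ m : Fin (k'+1), (b-a)^(m:ℕ) :=
      Finset.prod_le_prod (fun _ _ => norm_nonneg _) (fun m _ => h1 m)
    _ = (b-a)^S := by
      rw [Finset.prod_pow_eq_pow_sum, hS, Fin.sum_univ_eq_sum_range (fun n => n) (k'+1)]
  have hSk : S = (k'+1) * k' / 2 := by
    rw [hS, Finset.sum_range_id]
    rfl
  have hfinal : 2^k' * C₀^S * (b - a)^S ≤ ((1 + 2*C₀) * (b - a))^S := by
    have hSk' : k' ≤ S := by
      rw [hS]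
      calc k' = ∑ m ∈ ({k'} : Finset ℕ), m := by simp
      _ ≤ ∑ m ∈ Finset.range (k'+1), m :=
        Finset.sum_le_sum_of_subset (by simp)
    have h1 : (2:ℝ)^k' * C₀^S ≤ (1 + 2*C₀)^S := by
      calc (2:ℝ)^k' * C₀^S ≤ 2^S * C₀^S := by
            apply mul_le_mul_of_nonneg_right _ (by positivity)
            exact pow_le_pow_right₀ (by norm_num) hSk'
      _ = (2*C₀)^S := by rw [mul_pow]
      _ ≤ (1 + 2*C₀)^S := pow_le_pow_left₀ (by positivity) (by linarith) S
    calc 2^k' * C₀^S * (b - a)^S ≤ (1 + 2*C₀)^S * (b - a)^S := by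
          apply mul_le_mul_of_nonneg_right h1 (by positivity)
    _ = ((1 + 2*C₀) * (b - a))^S := by rw [mul_pow]
  rw [hdet0, hMNU, Matrix.det_mul, norm_mul, hk1, ← hSk]
  calc ‖N.det‖ * ‖U.det‖ ≤
      (((k'+1).factorial : ℝ) * (2^k' * C₀^S)) * (b - a)^S := by
        apply mul_le_mul _ hdetUb (by positivity) (by positivity)
        rw [← hprodcb]
        exact hdetN
  _ = ((k'+1).factorial : ℝ) * (2^k' * C₀^S * (b - a)^S) := by ring
  _ ≤ ((k'+1).factorial : ℝ) * ((1 + 2*C₀) * (b - a))^S := by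
        apply mul_le_mul_of_nonneg_left hfinal (by positivity)
end

section
/- There exists a universal constant C > 0 such that for every continuously differentiable function f : ℝ → ℂ: Σ_{k∈ℤ} Σ_{l∈ℤ} sup{ |f(x)−f(y)|²/(x−y)² : x ∈ [k,k+1], y ∈ [l,l+1], x ≠ y } ≤ C·( ∬_{ℝ×ℝ} |f(x)−f(y)|²/(x−y)² dx dy + Σ_{k∈ℤ} sup{ |f'(x)|² : x ∈ [k,k+1] } ), where both sides are interpreted as elements of [0,∞]. -/
open MeasureTheory

open Set
open scoped ENNReal

set_option maxHeartbeats 1600000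

namespace Stmt13Aux

noncomputable def cc : ℤ → ℝ≥0∞ := fun m =>
  ENNReal.ofReal (3 / ((max 1 (m.natAbs - 1) : ℕ) : ℝ) ^ 2)

lemma sum_range_le (N : ℕ) :
    ∑ n ∈ Finset.range (N + 1), (1:ℝ)/((n:ℝ)+1)^2 ≤ 2 - 1/((N:ℝ)+1) := by
  induction N with
  | zero => norm_num
  | succ N ih =>
    rw [Finset.sum_range_succ]
    have h1 : (0:ℝ) < (N:ℝ)+1 := by positivity
    have h2 : (0:ℝ) < (N:ℝ)+2 := by positivity
    have key : (1:ℝ)/(((N+1:ℕ):ℝ)+1)^2 ≤ 1/((N:ℝ)+1) - 1/((N:ℝ)+2) := by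
      push_cast
      rw [div_sub_div _ _ h1.ne' h2.ne', div_le_div_iff₀ (by positivity) (by positivity)]
      nlinarith
    push_cast at key ⊢
    have e : ((N:ℝ)+1+1) = (N:ℝ)+2 := by ring
    rw [e] at key ⊢
    linarith

lemma tsum_sq_le : ∑' n : ℕ, ENNReal.ofReal (1/((n:ℝ)+1)^2) ≤ 2 := by
  rw [ENNReal.tsum_eq_iSup_sum]
  refine iSup_le fun s => ?_
  obtain ⟨N, hN⟩ := s.exists_nat_subset_range
  calc ∑ n ∈ s, ENNReal.ofReal (1/((n:ℝ)+1)^2)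
      ≤ ∑ n ∈ Finset.range (N+1), ENNReal.ofReal (1/((n:ℝ)+1)^2) :=
        Finset.sum_le_sum_of_subset (hN.trans (Finset.range_subset_range.mpr (Nat.le_succ N)))
    _ = ENNReal.ofReal (∑ n ∈ Finset.range (N+1), 1/((n:ℝ)+1)^2) :=
        (ENNReal.ofReal_sum_of_nonneg (fun n _ => by positivity)).symm
    _ ≤ ENNReal.ofReal 2 := ENNReal.ofReal_le_ofReal
        ((sum_range_le N).trans (by
          have : 0 < 1/((N:ℝ)+1) := by positivity
          linarith))
    _ ≤ 2 := by norm_num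

lemma g_tsum_le : ∑' n : ℕ, ENNReal.ofReal (3 / ((max 1 (n - 1) : ℕ) : ℝ) ^ 2) ≤ 12 := by
  set g : ℕ → ℝ≥0∞ := fun n => ENNReal.ofReal (3 / ((max 1 (n - 1) : ℕ) : ℝ) ^ 2) with hg
  rw [tsum_eq_zero_add' ENNReal.summable, tsum_eq_zero_add' ENNReal.summable]
  have h0 : g 0 = ENNReal.ofReal 3 := by norm_num [hg]
  have h1 : g (0+1) = ENNReal.ofReal 3 := by norm_num [hg]
  have h2 : ∀ n : ℕ, g (n+1+1) = ENNReal.ofReal 3 * ENNReal.ofReal (1/((n:ℝ)+1)^2) := by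
    intro n
    have hm : max 1 (n+1+1-1) = n+1 := by omega
    rw [hg]
    simp only [hm]
    rw [← ENNReal.ofReal_mul (by norm_num)]
    push_cast
    ring_nf
  calc g 0 + (g (0+1) + ∑' n, g (n+1+1))
      = ENNReal.ofReal 3 + (ENNReal.ofReal 3
          + ENNReal.ofReal 3 * ∑' n : ℕ, ENNReal.ofReal (1/((n:ℝ)+1)^2)) := by
        rw [h0, tsum_congr h2, ENNReal.tsum_mul_left]
    _ ≤ ENNReal.ofReal 3 + (ENNReal.ofReal 3 + ENNReal.ofReal 3 * 2) := by
        gcongr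
        exact tsum_sq_le
    _ ≤ 12 := by
        rw [show ENNReal.ofReal 3 = 3 by norm_num]
        rw [show (3:ℝ≥0∞)*2 = 6 by norm_num]
        norm_num

lemma cc_tsum_le : ∑' m : ℤ, cc m ≤ 24 := by
  have hrec : cc = fun m : ℤ => Int.rec
      (fun n : ℕ => ENNReal.ofReal (3 / ((max 1 (n - 1) : ℕ) : ℝ) ^ 2))
      (fun n : ℕ => ENNReal.ofReal (3 / ((max 1 (n + 1 - 1) : ℕ) : ℝ) ^ 2)) m := by
    funext m
    cases m with
    | ofNat n => rfl
    | negSucc n => rfl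
  rw [hrec, (ENNReal.summable.hasSum.int_rec ENNReal.summable.hasSum).tsum_eq]
  have hshift : ∑' n : ℕ, ENNReal.ofReal (3 / ((max 1 (n + 1 - 1) : ℕ) : ℝ) ^ 2)
      ≤ ∑' n : ℕ, ENNReal.ofReal (3 / ((max 1 (n - 1) : ℕ) : ℝ) ^ 2) := by
    conv_rhs => rw [tsum_eq_zero_add' ENNReal.summable]
    exact le_add_self
  exact le_trans (add_le_add g_tsum_le (hshift.trans g_tsum_le)) (by norm_num)

lemma sq3 (a b c : ℝ) : (a + c + b)^2 ≤ 3 * (a^2 + b^2 + c^2) := by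
  nlinarith [sq_nonneg (a-b), sq_nonneg (a-c), sq_nonneg (b-c)]

lemma e2lem (p d : ℝ) (hp : 0 ≤ p) (hd : 2 ≤ d) :
    (3*p^2)/(d-1)^2 ≤ 27*(p^2/(d+1)^2) := by
  have h1 : (0:ℝ) < (d-1)^2 := by nlinarith
  have h2 : (0:ℝ) < (d+1)^2 := by nlinarith
  rw [mul_div_assoc' 27, div_le_div_iff₀ h1 h2]
  have h9 : (d+1)^2 ≤ 9*(d-1)^2 := by nlinarith
  nlinarith [mul_le_mul_of_nonneg_left h9 (sq_nonneg p)]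

/-- the key pairwise estimate -/
lemma key (f : ℝ → ℂ) (hf : ContDiff ℝ 1 f) (k l : ℤ) :
    (⨆ x ∈ Set.Icc (k : ℝ) ((k : ℝ) + 1), ⨆ y ∈ Set.Icc (l : ℝ) ((l : ℝ) + 1),
        ⨆ _ : x ≠ y, ENNReal.ofReal (‖f x - f y‖ ^ 2 / (x - y) ^ 2)) ≤
      cc (k - l) *
          ((⨆ x ∈ Set.Icc (k : ℝ) ((k : ℝ) + 1), ENNReal.ofReal (‖deriv f x‖ ^ 2)) +
            (⨆ x ∈ Set.Icc (l : ℝ) ((l : ℝ) + 1), ENNReal.ofReal (‖deriv f x‖ ^ 2))) +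
        27 * ∫⁻ p in (Set.Ico (k : ℝ) ((k : ℝ) + 1)) ×ˢ (Set.Ico (l : ℝ) ((l : ℝ) + 1)),
          ENNReal.ofReal (‖f p.1 - f p.2‖ ^ 2 / (p.1 - p.2) ^ 2) := by
  have hfc : Continuous f := hf.continuous
  have hfd : Differentiable ℝ f := hf.differentiable one_ne_zero
  have hdc : Continuous (deriv f) := hf.continuous_deriv le_rfl
  have habsd : Continuous fun w => ‖deriv f w‖ := continuous_norm.comp hdc
  set T : ℤ → ℝ≥0∞ := fun m =>
    ⨆ x ∈ Set.Icc (m : ℝ) ((m : ℝ) + 1), ENNReal.ofReal (‖deriv f x‖ ^ 2) with hT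
  refine iSup₂_le fun x hx => iSup₂_le fun y hy => iSup_le fun hxy => ?_
  have hxy2 : (0:ℝ) < (x - y)^2 := by
    have : x - y ≠ 0 := sub_ne_zero.mpr hxy
    positivity
  by_cases hD : (k - l).natAbs ≤ 1
  · -- diagonal case
    -- main estimate on a convex interval
    have main : ∀ a b : ℝ, a ≤ b → x ∈ Set.Icc a b → y ∈ Set.Icc a b →
        (Set.Icc a b ⊆ Set.Icc (k:ℝ) ((k:ℝ)+1) ∪ Set.Icc (l:ℝ) ((l:ℝ)+1)) →
        ENNReal.ofReal (‖f x - f y‖ ^ 2 / (x - y) ^ 2) ≤ T k + T l := by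
      intro a b hab hxJ hyJ hsub
      obtain ⟨z, hz, hmax⟩ := isCompact_Icc.exists_isMaxOn ⟨a, le_refl a, hab⟩
        habsd.continuousOn
      have hmvt : ‖f x - f y‖ ≤ ‖deriv f z‖ * |x - y| := by
        have h := Convex.norm_image_sub_le_of_norm_deriv_le (f := f)
          (s := Set.Icc a b) (C := ‖deriv f z‖)
          (fun w _ => hfd w) (fun w hw => by
            simpa using hmax hw)
          (convex_Icc a b) hyJ hxJ
        simpa [Real.norm_eq_abs] using h
      have hdiv : ‖f x - f y‖ ^ 2 / (x - y) ^ 2 ≤ ‖deriv f z‖ ^ 2 := by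
        rw [div_le_iff₀ hxy2]
        have h1 : (0:ℝ) ≤ ‖f x - f y‖ := norm_nonneg _
        have h2 : (0:ℝ) ≤ ‖deriv f z‖ := norm_nonneg _
        nlinarith [sq_abs (x - y), abs_nonneg (x - y), hmvt]
      refine le_trans (ENNReal.ofReal_le_ofReal hdiv) ?_
      rcases hsub hz with hz' | hz'
      · exact le_trans
          (le_biSup (fun w => ENNReal.ofReal (‖deriv f w‖ ^ 2)) hz') le_self_add
      · exact le_trans
          (le_biSup (fun w => ENNReal.ofReal (‖deriv f w‖ ^ 2)) hz') le_add_self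
    have hTk : ENNReal.ofReal (‖f x - f y‖ ^ 2 / (x - y) ^ 2) ≤ T k + T l := by
      have hcase : l = k - 1 ∨ l = k ∨ l = k + 1 := by omega
      rcases hcase with h | h | h
      · subst h
        refine main ((k:ℝ) - 1) ((k:ℝ) + 1) (by linarith) ?_ ?_ ?_
        · exact ⟨by linarith [hx.1], hx.2⟩
        · push_cast at hy ⊢; exact ⟨hy.1, by linarith [hy.2]⟩
        · intro w hw
          by_cases hwk : w ≤ (k:ℝ)
          · right; push_cast; exact ⟨hw.1, by linarith⟩
          · left; exact ⟨by linarith, hw.2⟩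
      · subst h
        exact main (l:ℝ) ((l:ℝ) + 1) (by linarith) hx hy (fun w hw => Or.inl hw)
      · subst h
        refine main (k:ℝ) ((k:ℝ) + 2) (by linarith) ?_ ?_ ?_
        · exact ⟨hx.1, by linarith [hx.2]⟩
        · push_cast at hy ⊢; exact ⟨by linarith [hy.1], by linarith [hy.2]⟩
        · intro w hw
          by_cases hwk : w ≤ (k:ℝ) + 1
          · left; exact ⟨hw.1, hwk⟩
          · right; push_cast; exact ⟨by linarith, by linarith [hw.2]⟩
    have hc1 : (1:ℝ≥0∞) ≤ cc (k - l) := by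
      have hm : max 1 ((k-l).natAbs - 1) = 1 := by omega
      have : cc (k - l) = ENNReal.ofReal 3 := by simp [cc, hm]
      rw [this]
      exact ENNReal.one_le_ofReal.mpr (by norm_num)
    calc ENNReal.ofReal (‖f x - f y‖ ^ 2 / (x - y) ^ 2)
        ≤ T k + T l := hTk
      _ = 1 * (T k + T l) := (one_mul _).symm
      _ ≤ cc (k - l) * (T k + T l) := mul_le_mul_left hc1 _
      _ ≤ _ := le_self_add
  · -- off-diagonal case
    push_neg at hD
    set D : ℕ := (k - l).natAbs with hDdef
    set d : ℝ := (D : ℝ) with hddef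
    have hd2 : (2:ℝ) ≤ d := by rw [hddef]; exact_mod_cast hD
    have hcast : d = |(k:ℝ) - (l:ℝ)| := by
      rw [hddef, hDdef, Nat.cast_natAbs]
      push_cast
      ring_nf
    clear_value d D
    have habs : ∀ u v : ℝ, u ∈ Set.Icc (k:ℝ) ((k:ℝ)+1) → v ∈ Set.Icc (l:ℝ) ((l:ℝ)+1) →
        d - 1 ≤ |u - v| ∧ |u - v| ≤ d + 1 := by
      intro u v hu hv
      have h1 : |u - v - ((k:ℝ) - l)| ≤ 1 :=
        abs_le.mpr ⟨by linarith [hu.1, hu.2, hv.1, hv.2], by linarith [hu.1, hu.2, hv.1, hv.2]⟩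
      have h1' := abs_le.mp h1
      rcases abs_cases ((k:ℝ) - l) with ⟨he, hsg⟩ | ⟨he, hsg⟩
      · have hkl : (k:ℝ) - l = d := by rw [hcast, he]
        have hpos : 0 < u - v := by nlinarith [h1'.1]
        rw [abs_of_pos hpos]
        constructor <;> nlinarith [h1'.1, h1'.2]
      · have hkl : (k:ℝ) - l = -d := by
          have : d = -((k:ℝ) - l) := by rw [hcast, he]
          linarith
        have hneg : u - v < 0 := by nlinarith [h1'.2]
        rw [abs_of_neg hneg]
        constructor <;> nlinarith [h1'.1, h1'.2]
    have hGmeas : Measurable fun p : ℝ × ℝ =>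
        ENNReal.ofReal (‖f p.1 - f p.2‖ ^ 2 / (p.1 - p.2) ^ 2) := by
      apply Measurable.ennreal_ofReal
      apply Measurable.div
      · exact ((continuous_norm.comp ((hfc.comp continuous_fst).sub
          (hfc.comp continuous_snd))).pow 2).measurable
      · exact ((continuous_fst.sub continuous_snd).pow 2).measurable
    set Q := (Set.Ico (k:ℝ) ((k:ℝ)+1)) ×ˢ (Set.Ico (l:ℝ) ((l:ℝ)+1)) with hQ
    have hQvol : volume Q = 1 := by
      rw [hQ, Measure.volume_eq_prod, Measure.prod_prod, Real.volume_Ico, Real.volume_Ico]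
      norm_num
    have hphi : Continuous fun p : ℝ × ℝ => ‖f p.1 - f p.2‖ :=
      continuous_norm.comp ((hfc.comp continuous_fst).sub (hfc.comp continuous_snd))
    obtain ⟨p₀, hp₀, hmin⟩ := ((isCompact_Icc (a := (k:ℝ)) (b := (k:ℝ)+1)).prod
      (isCompact_Icc (a := (l:ℝ)) (b := (l:ℝ)+1))).exists_isMinOn
      ⟨((k:ℝ), (l:ℝ)), ⟨⟨le_refl _, by linarith⟩, ⟨le_refl _, by linarith⟩⟩⟩ hphi.continuousOn
    obtain ⟨z1, hz1, hmax1⟩ := (isCompact_Icc (a := (k:ℝ)) (b := (k:ℝ)+1)).exists_isMaxOn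
      ⟨(k:ℝ), le_refl _, by linarith⟩ habsd.continuousOn
    obtain ⟨z2, hz2, hmax2⟩ := (isCompact_Icc (a := (l:ℝ)) (b := (l:ℝ)+1)).exists_isMaxOn
      ⟨(l:ℝ), le_refl _, by linarith⟩ habsd.continuousOn
    set A := ‖deriv f z1‖ with hAdef
    set B := ‖deriv f z2‖ with hBdef
    set φ₀ := ‖f p₀.1 - f p₀.2‖ with hφdef
    have hA0 : 0 ≤ A := norm_nonneg _
    have hB0 : 0 ≤ B := norm_nonneg _
    have hφ0 : 0 ≤ φ₀ := norm_nonneg _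
    clear_value A B φ₀
    have hMVT : ∀ (a : ℝ) (z : ℝ), z ∈ Set.Icc a (a+1) →
        IsMaxOn (fun w => ‖deriv f w‖) (Set.Icc a (a+1)) z →
        ∀ u ∈ Set.Icc a (a+1), ∀ v ∈ Set.Icc a (a+1),
        ‖f u - f v‖ ≤ ‖deriv f z‖ := by
      intro a z hz hmax u hu v hv
      have h := Convex.norm_image_sub_le_of_norm_deriv_le (f := f)
        (s := Set.Icc a (a+1)) (C := ‖deriv f z‖)
        (fun w _ => hfd w) (fun w hw => by simpa using hmax hw)
        (convex_Icc _ _) hv hu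
      have h2 : ‖u - v‖ ≤ 1 := by
        rw [Real.norm_eq_abs, abs_le]
        exact ⟨by linarith [hu.1, hv.2], by linarith [hu.2, hv.1]⟩
      nlinarith [norm_nonneg (deriv f z), norm_nonneg (u - v)]
    have hp₀1 : p₀.1 ∈ Set.Icc (k:ℝ) ((k:ℝ)+1) := hp₀.1
    have hp₀2 : p₀.2 ∈ Set.Icc (l:ℝ) ((l:ℝ)+1) := hp₀.2
    have hnum : ‖f x - f y‖ ≤ A + φ₀ + B := by
      rw [hAdef, hBdef, hφdef]
      have t1 : f x - f y = (f x - f p₀.1) + (f p₀.1 - f p₀.2) + (f p₀.2 - f y) := by ring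
      rw [t1]
      refine le_trans (norm_add_le _ _) ?_
      refine add_le_add (le_trans (norm_add_le _ _) (add_le_add ?_ le_rfl)) ?_
      · exact hMVT (k:ℝ) z1 hz1 hmax1 x hx p₀.1 hp₀1
      · exact hMVT (l:ℝ) z2 hz2 hmax2 p₀.2 hp₀2 y hy
    have habs2 : ‖f x - f y‖ ^ 2 ≤ (A + φ₀ + B)^2 :=
      pow_le_pow_left₀ (norm_nonneg _) hnum 2
    have hsq : ‖f x - f y‖ ^ 2 ≤ 3 * (A^2 + B^2 + φ₀^2) :=
      habs2.trans (sq3 A B φ₀)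
    obtain ⟨hxyge, _⟩ := habs x y hx hy
    have hden : (d - 1)^2 ≤ (x - y)^2 := by
      have h := pow_le_pow_left₀ (by linarith : (0:ℝ) ≤ d - 1) hxyge 2
      rwa [sq_abs] at h
    have hd1pos : (0:ℝ) < (d-1)^2 := by
      have : (0:ℝ) < d - 1 := by linarith
      positivity
    have hpt : ‖f x - f y‖^2/(x-y)^2
        ≤ 3/(d-1)^2 * (A^2+B^2) + 27 * (φ₀^2/(d+1)^2) := by
      have hstep : ‖f x - f y‖^2/(x-y)^2 ≤ (3*(A^2+B^2+φ₀^2))/(d-1)^2 :=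
        div_le_div₀ (by positivity) hsq hd1pos hden
      refine hstep.trans ?_
      have e1 : (3*(A^2+B^2+φ₀^2))/(d-1)^2
          = 3/(d-1)^2*(A^2+B^2) + (3*φ₀^2)/(d-1)^2 := by ring
      rw [e1]
      have e2 : (3*φ₀^2)/(d-1)^2 ≤ 27*(φ₀^2/(d+1)^2) := e2lem φ₀ d hφ0 hd2
      linarith
    have hint : ENNReal.ofReal (φ₀^2/(d+1)^2) ≤ ∫⁻ p in Q,
        ENNReal.ofReal (‖f p.1 - f p.2‖ ^ 2 / (p.1 - p.2) ^ 2) := by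
      have hconst : ∀ p ∈ Q, ENNReal.ofReal (φ₀^2/(d+1)^2)
          ≤ ENNReal.ofReal (‖f p.1 - f p.2‖ ^ 2 / (p.1 - p.2) ^ 2) := by
        intro p hp
        have hu : p.1 ∈ Set.Icc (k:ℝ) ((k:ℝ)+1) := Set.Ico_subset_Icc_self hp.1
        have hv : p.2 ∈ Set.Icc (l:ℝ) ((l:ℝ)+1) := Set.Ico_subset_Icc_self hp.2
        obtain ⟨hge, hle⟩ := habs p.1 p.2 hu hv
        have hpne : p.1 - p.2 ≠ 0 := by
          intro h0
          rw [h0, abs_zero] at hge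
          linarith
        have hppos : (0:ℝ) < (p.1 - p.2)^2 := by positivity
        apply ENNReal.ofReal_le_ofReal
        have hφle : φ₀ ≤ ‖f p.1 - f p.2‖ := by
          rw [hφdef]; exact hmin ⟨hu, hv⟩
        refine div_le_div₀ (by positivity) (pow_le_pow_left₀ hφ0 hφle 2) hppos ?_
        have h := pow_le_pow_left₀ (abs_nonneg (p.1 - p.2)) hle 2
        rwa [sq_abs] at h
      calc ENNReal.ofReal (φ₀^2/(d+1)^2)
          = ENNReal.ofReal (φ₀^2/(d+1)^2) * volume Q := by rw [hQvol, mul_one]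
        _ = ∫⁻ _ in Q, ENNReal.ofReal (φ₀^2/(d+1)^2) := (setLIntegral_const _ _).symm
        _ ≤ _ := setLIntegral_mono hGmeas hconst
    have hccval : cc (k - l) = ENNReal.ofReal (3/(d-1)^2) := by
      have hm : max 1 ((k-l).natAbs - 1) = (k-l).natAbs - 1 := by omega
      have hcast2 : (((k-l).natAbs - 1 : ℕ) : ℝ) = d - 1 := by
        rw [Nat.cast_sub (show 1 ≤ (k-l).natAbs by omega)]
        rw [hddef, hDdef]
        norm_num
      simp only [cc, hm, hcast2]
    have hTk' : ENNReal.ofReal (A^2) ≤ T k := by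
      rw [hAdef]
      exact le_biSup (fun w => ENNReal.ofReal (‖deriv f w‖ ^ 2)) hz1
    have hTl' : ENNReal.ofReal (B^2) ≤ T l := by
      rw [hBdef]
      exact le_biSup (fun w => ENNReal.ofReal (‖deriv f w‖ ^ 2)) hz2
    calc ENNReal.ofReal (‖f x - f y‖ ^ 2 / (x - y) ^ 2)
        ≤ ENNReal.ofReal (3/(d-1)^2 * (A^2+B^2) + 27 * (φ₀^2/(d+1)^2)) :=
          ENNReal.ofReal_le_ofReal hpt
      _ ≤ ENNReal.ofReal (3/(d-1)^2 * (A^2+B^2)) + ENNReal.ofReal (27 * (φ₀^2/(d+1)^2)) :=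
          ENNReal.ofReal_add_le
      _ ≤ cc (k - l) * (T k + T l) + 27 * ∫⁻ p in Q,
            ENNReal.ofReal (‖f p.1 - f p.2‖ ^ 2 / (p.1 - p.2) ^ 2) := by
          refine add_le_add ?_ ?_
          · rw [ENNReal.ofReal_mul (by positivity), ENNReal.ofReal_add (by positivity) (by positivity), hccval.symm]
            exact mul_le_mul_right (add_le_add hTk' hTl') _
          · rw [ENNReal.ofReal_mul (by norm_num)]
            rw [show ENNReal.ofReal 27 = 27 by norm_num]
            exact mul_le_mul_right hint _

lemma part1 (T : ℤ → ℝ≥0∞) :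
    (∑' k : ℤ, ∑' l : ℤ, cc (k - l) * (T k + T l)) ≤ 48 * ∑' m : ℤ, T m := by
  have hrow : ∀ k : ℤ, (∑' l : ℤ, cc (k - l)) = ∑' m : ℤ, cc m := by
    intro k
    rw [← (Equiv.subLeft k).tsum_eq cc]
    exact tsum_congr fun l => by simp [Equiv.subLeft]
  have hcol : ∀ l : ℤ, (∑' k : ℤ, cc (k - l)) = ∑' m : ℤ, cc m := by
    intro l
    rw [← (Equiv.subRight l).tsum_eq cc]
    exact tsum_congr fun k => by simp [Equiv.subRight]
  calc (∑' k : ℤ, ∑' l : ℤ, cc (k - l) * (T k + T l))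
      = (∑' k : ℤ, (((∑' l : ℤ, cc (k - l)) * T k) + ∑' l : ℤ, cc (k - l) * T l)) := by
        refine tsum_congr fun k => ?_
        rw [← ENNReal.tsum_mul_right, ← ENNReal.tsum_add]
        exact tsum_congr fun l => mul_add _ _ _
    _ = (∑' k : ℤ, (∑' m : ℤ, cc m) * T k) + ∑' k : ℤ, ∑' l : ℤ, cc (k - l) * T l := by
        rw [← ENNReal.tsum_add]
        exact tsum_congr fun k => by rw [hrow k]
    _ = (∑' m : ℤ, cc m) * (∑' m : ℤ, T m) + (∑' m : ℤ, cc m) * (∑' m : ℤ, T m) := by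
        congr 1
        · exact ENNReal.tsum_mul_left
        · calc ∑' k : ℤ, ∑' l : ℤ, cc (k - l) * T l
              = ∑' l : ℤ, ∑' k : ℤ, cc (k - l) * T l := ENNReal.tsum_comm
            _ = ∑' l : ℤ, (∑' m : ℤ, cc m) * T l :=
                tsum_congr fun l => by rw [ENNReal.tsum_mul_right, hcol l]
            _ = (∑' m : ℤ, cc m) * ∑' m : ℤ, T m := ENNReal.tsum_mul_left
    _ ≤ 24 * (∑' m : ℤ, T m) + 24 * (∑' m : ℤ, T m) :=
        add_le_add (mul_le_mul_left cc_tsum_le _) (mul_le_mul_left cc_tsum_le _)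
    _ = 48 * ∑' m : ℤ, T m := by rw [← add_mul]; norm_num

lemma part2 (G : ℝ × ℝ → ℝ≥0∞) (hG : Measurable G) :
    (∑' k : ℤ, ∑' l : ℤ, 27 *
        ∫⁻ p in (Set.Ico (k : ℝ) ((k : ℝ) + 1)) ×ˢ (Set.Ico (l : ℝ) ((l : ℝ) + 1)), G p)
      ≤ 27 * ∫⁻ p, G p := by
  simp_rw [ENNReal.tsum_mul_left]
  refine mul_le_mul_right ?_ 27
  rw [show (∑' k : ℤ, ∑' l : ℤ,
      ∫⁻ p in (Set.Ico (k : ℝ) ((k : ℝ) + 1)) ×ˢ (Set.Ico (l : ℝ) ((l : ℝ) + 1)), G p)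
      = ∑' q : ℤ × ℤ,
      ∫⁻ p in (Set.Ico (q.1 : ℝ) ((q.1 : ℝ) + 1)) ×ˢ (Set.Ico (q.2 : ℝ) ((q.2 : ℝ) + 1)), G p
    from (ENNReal.tsum_prod (f := fun (k l : ℤ) =>
      ∫⁻ p in (Set.Ico (k : ℝ) ((k : ℝ) + 1)) ×ˢ (Set.Ico (l : ℝ) ((l : ℝ) + 1)), G p)).symm]
  have hms : ∀ q : ℤ × ℤ, MeasurableSet
      ((Set.Ico (q.1 : ℝ) ((q.1 : ℝ) + 1)) ×ˢ (Set.Ico (q.2 : ℝ) ((q.2 : ℝ) + 1))) :=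
    fun q => measurableSet_Ico.prod measurableSet_Ico
  have hdint : ∀ a b : ℤ, a ≠ b →
      Disjoint (Set.Ico (a:ℝ) ((a:ℝ)+1)) (Set.Ico (b:ℝ) ((b:ℝ)+1)) := by
    intro a b hab
    rw [Set.Ico_disjoint_Ico]
    rcases lt_or_gt_of_ne hab with h | h
    · have h1 : (a:ℝ) + 1 ≤ (b:ℝ) := by exact_mod_cast Int.add_one_le_iff.mpr h
      exact le_trans (min_le_left _ _) (le_trans h1 (le_max_right _ _))
    · have h1 : (b:ℝ) + 1 ≤ (a:ℝ) := by exact_mod_cast Int.add_one_le_iff.mpr h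
      exact le_trans (min_le_right _ _) (le_trans h1 (le_max_left _ _))
  have hdisj : Pairwise (Function.onFun Disjoint fun q : ℤ × ℤ =>
      (Set.Ico (q.1 : ℝ) ((q.1 : ℝ) + 1)) ×ˢ (Set.Ico (q.2 : ℝ) ((q.2 : ℝ) + 1))) := by
    intro p q hpq
    rcases eq_or_ne p.1 q.1 with h1 | h1
    · have h2 : p.2 ≠ q.2 := fun h2 => hpq (Prod.ext h1 h2)
      exact Disjoint.set_prod_right (hdint _ _ h2) _ _
    · exact Disjoint.set_prod_left (hdint _ _ h1) _ _
  rw [← lintegral_iUnion hms hdisj G]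
  exact setLIntegral_le_lintegral _ _

end Stmt13Aux

open Stmt13Aux in
/-- the squared discrete norm `‖f‖²_{ℬℋ(1/2)}` is controlled by the (Gagliardo)
squared `H^{1/2}` seminorm plus the squared discrete norm `‖f'‖²_{ℬ(1)}`,
as elements of `[0,∞]`. -/
theorem stmt_13 :
    ∃ C : ℝ, 0 < C ∧
      ∀ f : ℝ → ℂ, ContDiff ℝ 1 f →
        (∑' k : ℤ, ∑' l : ℤ,
            ⨆ x ∈ Set.Icc (k : ℝ) ((k : ℝ) + 1), ⨆ y ∈ Set.Icc (l : ℝ) ((l : ℝ) + 1),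
              ⨆ _ : x ≠ y,
                ENNReal.ofReal (‖f x - f y‖ ^ 2 / (x - y) ^ 2)) ≤
          ENNReal.ofReal C *
            ((∫⁻ p : ℝ × ℝ,
                ENNReal.ofReal (‖f p.1 - f p.2‖ ^ 2 / (p.1 - p.2) ^ 2)) +
              ∑' k : ℤ,
                ⨆ x ∈ Set.Icc (k : ℝ) ((k : ℝ) + 1),
                  ENNReal.ofReal (‖deriv f x‖ ^ 2)) := by
  refine ⟨100, by norm_num, ?_⟩
  intro f hf
  have hfc : Continuous f := hf.continuous
  have hGmeas : Measurable fun p : ℝ × ℝ =>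
      ENNReal.ofReal (‖f p.1 - f p.2‖ ^ 2 / (p.1 - p.2) ^ 2) := by
    apply Measurable.ennreal_ofReal
    apply Measurable.div
    · exact ((continuous_norm.comp ((hfc.comp continuous_fst).sub
        (hfc.comp continuous_snd))).pow 2).measurable
    · exact ((continuous_fst.sub continuous_snd).pow 2).measurable
  refine le_trans (ENNReal.tsum_le_tsum fun k => ENNReal.tsum_le_tsum fun l =>
    key f hf k l) ?_
  calc (∑' k : ℤ, ∑' l : ℤ,
        (cc (k - l) *
          ((⨆ x ∈ Set.Icc (k : ℝ) ((k : ℝ) + 1), ENNReal.ofReal (‖deriv f x‖ ^ 2)) +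
            (⨆ x ∈ Set.Icc (l : ℝ) ((l : ℝ) + 1), ENNReal.ofReal (‖deriv f x‖ ^ 2))) +
          27 * ∫⁻ p in (Set.Ico (k : ℝ) ((k : ℝ) + 1)) ×ˢ (Set.Ico (l : ℝ) ((l : ℝ) + 1)),
            ENNReal.ofReal (‖f p.1 - f p.2‖ ^ 2 / (p.1 - p.2) ^ 2)))
      = (∑' k : ℤ, ∑' l : ℤ,
          cc (k - l) *
          ((⨆ x ∈ Set.Icc (k : ℝ) ((k : ℝ) + 1), ENNReal.ofReal (‖deriv f x‖ ^ 2)) +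
            (⨆ x ∈ Set.Icc (l : ℝ) ((l : ℝ) + 1), ENNReal.ofReal (‖deriv f x‖ ^ 2))))
        + ∑' k : ℤ, ∑' l : ℤ,
          27 * ∫⁻ p in (Set.Ico (k : ℝ) ((k : ℝ) + 1)) ×ˢ (Set.Ico (l : ℝ) ((l : ℝ) + 1)),
            ENNReal.ofReal (‖f p.1 - f p.2‖ ^ 2 / (p.1 - p.2) ^ 2) := by
        rw [← ENNReal.tsum_add]
        exact tsum_congr fun k => by rw [← ENNReal.tsum_add]
    _ ≤ 48 * (∑' m : ℤ, ⨆ x ∈ Set.Icc (m : ℝ) ((m : ℝ) + 1),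
            ENNReal.ofReal (‖deriv f x‖ ^ 2))
        + 27 * ∫⁻ p : ℝ × ℝ,
            ENNReal.ofReal (‖f p.1 - f p.2‖ ^ 2 / (p.1 - p.2) ^ 2) :=
        add_le_add
          (part1 (fun m : ℤ => ⨆ x ∈ Set.Icc (m : ℝ) ((m : ℝ) + 1),
            ENNReal.ofReal (‖deriv f x‖ ^ 2)))
          (part2 (fun p : ℝ × ℝ =>
            ENNReal.ofReal (‖f p.1 - f p.2‖ ^ 2 / (p.1 - p.2) ^ 2)) hGmeas)
    _ ≤ ENNReal.ofReal 100 *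
          ((∫⁻ p : ℝ × ℝ,
              ENNReal.ofReal (‖f p.1 - f p.2‖ ^ 2 / (p.1 - p.2) ^ 2)) +
            ∑' k : ℤ, ⨆ x ∈ Set.Icc (k : ℝ) ((k : ℝ) + 1),
              ENNReal.ofReal (‖deriv f x‖ ^ 2)) := by
        rw [show ENNReal.ofReal 100 = (100:ℝ≥0∞) by norm_num, mul_add, add_comm]
        exact add_le_add
          (mul_le_mul_left (by norm_num : (27:ℝ≥0∞) ≤ 100) _)
          (mul_le_mul_left (by norm_num : (48:ℝ≥0∞) ≤ 100) _)
end

section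
/- There exists a universal constant C > 0 such that for every continuously differentiable function f : ℝ → ℂ with f and f' bounded: sup_{k∈ℤ} Σ_{l∈ℤ} sup{ |f(x)−f(y)|²/(x−y)² : x ∈ [k,k+1], y ∈ [l,l+1], x ≠ y } ≤ C·( ‖f'‖²_{L∞} + ‖f‖²_{L∞} ). -/
open MeasureTheory

set_option maxHeartbeats 1000000 in
/-- the squared row-sum discrete norm `‖f‖²_{ℬℋ(1)}` is controlled by
`C·(‖f'‖²_{L∞} + ‖f‖²_{L∞})`. -/
theorem stmt_14 :
    ∃ C : ℝ, 0 < C ∧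
      ∀ (f : ℝ → ℂ) (M M' : ℝ), ContDiff ℝ 1 f →
        (∀ x, ‖f x‖ ≤ M) → (∀ x, ‖deriv f x‖ ≤ M') →
        (⨆ k : ℤ, ∑' l : ℤ,
            ⨆ x ∈ Set.Icc (k : ℝ) ((k : ℝ) + 1), ⨆ y ∈ Set.Icc (l : ℝ) ((l : ℝ) + 1),
              ⨆ _ : x ≠ y,
                ENNReal.ofReal (‖f x - f y‖ ^ 2 / (x - y) ^ 2)) ≤
          ENNReal.ofReal (C * (M' ^ 2 + M ^ 2)) := by
  refine ⟨96, by norm_num, ?_⟩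
  intro f M M' hf hM hM'
  have hM0 : 0 ≤ M := (norm_nonneg _).trans (hM 0)
  have hM'0 : 0 ≤ M' := (norm_nonneg _).trans (hM' 0)
  -- Lipschitz bound from the mean value inequality
  have lip : ∀ x y : ℝ, ‖f x - f y‖ ≤ M' * |x - y| := by
    intro x y
    have := convex_univ.norm_image_sub_le_of_norm_deriv_le
      (f := f) (fun z _ => (hf.differentiable one_ne_zero).differentiableAt)
      (fun z _ => by simpa using hM' z)
      (Set.mem_univ y) (Set.mem_univ x)
    simpa [Real.norm_eq_abs] using this
  -- dominating sequence
  set b : ℤ → ENNReal := fun j => if |j| ≤ 1 then ENNReal.ofReal (M' ^ 2)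
      else ENNReal.ofReal (16 * M ^ 2 / (j : ℝ) ^ 2) with hb
  have key : ∀ k l : ℤ,
      (⨆ x ∈ Set.Icc (k : ℝ) ((k : ℝ) + 1), ⨆ y ∈ Set.Icc (l : ℝ) ((l : ℝ) + 1),
        ⨆ _ : x ≠ y, ENNReal.ofReal (‖f x - f y‖ ^ 2 / (x - y) ^ 2))
        ≤ b (l - k) := by
    intro k l
    refine iSup₂_le fun x hx => iSup₂_le fun y hy => iSup_le fun hxy => ?_
    obtain ⟨hx1, hx2⟩ := hx
    obtain ⟨hy1, hy2⟩ := hy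
    by_cases hcase : |l - k| ≤ 1
    · rw [hb]; simp only [hcase, if_true]
      apply ENNReal.ofReal_le_ofReal
      have h0 : x - y ≠ 0 := sub_ne_zero.mpr hxy
      have hxy2 : (0 : ℝ) < (x - y) ^ 2 := by
        have := abs_pos.mpr h0
        calc (0 : ℝ) < |x - y| ^ 2 := by positivity
          _ = (x - y) ^ 2 := sq_abs _
      rw [div_le_iff₀ hxy2]
      calc ‖f x - f y‖ ^ 2 ≤ (M' * |x - y|) ^ 2 := by
            have := lip x y
            have h1 : 0 ≤ ‖f x - f y‖ := norm_nonneg _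
            nlinarith [sq_nonneg M', sq_nonneg M]
        _ = M' ^ 2 * (x - y) ^ 2 := by rw [mul_pow, sq_abs]
    · simp only [hb, hcase, if_false] -- far case
      apply ENNReal.ofReal_le_ofReal
      have hd2 : (2 : ℝ) ≤ |(l : ℝ) - (k : ℝ)| := by
        have h2 : (2 : ℤ) ≤ |l - k| := by omega
        have h3 : ((2 : ℤ) : ℝ) ≤ ((|l - k| : ℤ) : ℝ) := Int.cast_le.mpr h2
        rwa [Int.cast_abs, Int.cast_sub, Int.cast_two] at h3
      have habs : |(l : ℝ) - (k : ℝ)| ≤ |x - y| + 1 := by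
        have h2 : |(x - (k : ℝ)) + ((l : ℝ) - y)| ≤ 1 :=
          abs_le.mpr ⟨by linarith, by linarith⟩
        calc |(l : ℝ) - (k : ℝ)| = |(y - x) + ((x - (k : ℝ)) + ((l : ℝ) - y))| := by ring_nf
          _ ≤ |y - x| + |(x - (k : ℝ)) + ((l : ℝ) - y)| := abs_add_le _ _
          _ ≤ |x - y| + 1 := by rw [abs_sub_comm]; linarith
      have hden : ((l : ℝ) - (k : ℝ)) ^ 2 / 4 ≤ (x - y) ^ 2 := by
        nlinarith [sq_abs ((l : ℝ) - (k : ℝ)), sq_abs (x - y), abs_nonneg (x - y)]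
      have hdpos : (0 : ℝ) < ((l : ℝ) - (k : ℝ)) ^ 2 / 4 := by nlinarith [sq_abs ((l:ℝ)-(k:ℝ))]
      have hnum : ‖f x - f y‖ ^ 2 ≤ (2 * M) ^ 2 := by
        have h1 : ‖f x - f y‖ ≤ 2 * M := by
          calc ‖f x - f y‖ ≤ ‖f x‖ + ‖f y‖ := by
                simpa using norm_sub_le (f x) (f y)
            _ ≤ 2 * M := by linarith [hM x, hM y]
        nlinarith [norm_nonneg (f x - f y)]
      have hdne : ((l : ℝ) - (k : ℝ)) ≠ 0 := by
        intro h; rw [h] at hd2; simp at hd2; linarith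
      have : ‖f x - f y‖ ^ 2 / (x - y) ^ 2
          ≤ (2 * M) ^ 2 / (((l : ℝ) - (k : ℝ)) ^ 2 / 4) :=
        div_le_div₀ (by positivity) hnum hdpos hden
      calc ‖f x - f y‖ ^ 2 / (x - y) ^ 2
          ≤ (2 * M) ^ 2 / (((l : ℝ) - (k : ℝ)) ^ 2 / 4) := this
        _ = 16 * M ^ 2 / ((l : ℝ) - (k : ℝ)) ^ 2 := by field_simp; ring
        _ = 16 * M ^ 2 / ((l - k : ℤ) : ℝ) ^ 2 := by push_cast; ring_nf
  -- sum the dominating sequence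
  have hBsplit : ∀ j : ℤ, b j ≤ (if |j| ≤ 1 then ENNReal.ofReal (M' ^ 2) else 0)
      + ENNReal.ofReal (16 * M ^ 2) * ENNReal.ofReal (1 / (j : ℝ) ^ 2) := by
    intro j
    have hBeq : ENNReal.ofReal (16 * M ^ 2 / (j : ℝ) ^ 2)
        = ENNReal.ofReal (16 * M ^ 2) * ENNReal.ofReal (1 / (j : ℝ) ^ 2) := by
      rw [← ENNReal.ofReal_mul (by positivity)]
      rw [mul_one_div]
    rw [hb]
    by_cases hcase : |j| ≤ 1
    · simp only [hcase, if_true]; exact le_add_of_le_of_nonneg le_rfl (zero_le)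
    · simp only [hcase, if_false]; rw [hBeq]; exact le_add_of_nonneg_of_le (zero_le) le_rfl
  have hAsum : ∑' j : ℤ, (if |j| ≤ 1 then ENNReal.ofReal (M' ^ 2) else 0)
      = ENNReal.ofReal (3 * M' ^ 2) := by
    rw [tsum_eq_sum (s := ({-1, 0, 1} : Finset ℤ)) (fun j hj => by
      have : ¬ |j| ≤ 1 := by
        simp only [Finset.mem_insert, Finset.mem_singleton] at hj
        rw [abs_le]
        omega
      simp [this])]
    rw [show ({-1, 0, 1} : Finset ℤ) = insert (-1) (insert 0 {1}) from rfl]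
    rw [Finset.sum_insert (by decide), Finset.sum_insert (by decide), Finset.sum_singleton]
    norm_num
    rw [← ENNReal.ofReal_add (by positivity) (by positivity),
      ← ENNReal.ofReal_add (by positivity) (by positivity)]
    ring_nf
    rw [ENNReal.ofReal_mul' (by norm_num), ENNReal.ofReal_ofNat]
  -- the zeta(2)-type sum over ℤ
  have hzsum : (∑' j : ℤ, ENNReal.ofReal (1 / (j : ℝ) ^ 2)) ≤ ENNReal.ofReal 6 := by
    have hbase := hasSum_zeta_two
    have H1 : HasSum (fun n : ℕ => 1 / (((n : ℤ)) : ℝ) ^ 2) (Real.pi ^ 2 / 6) := by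
      convert hbase using 2 with n
      all_goals push_cast
      all_goals try ring
    have H2 : HasSum (fun n : ℕ => 1 / (((-(n + 1) : ℤ)) : ℝ) ^ 2) (Real.pi ^ 2 / 6) := by
      have hinj : Function.Injective (fun n : ℕ => n + 1) := add_left_injective 1
      have H2' : HasSum ((fun n : ℕ => 1 / (n : ℝ) ^ 2) ∘ (fun n : ℕ => n + 1))
          (Real.pi ^ 2 / 6) := by
        rw [Function.Injective.hasSum_iff hinj ?_]
        · exact hbase
        · intro x hx
          have hx0 : x = 0 := by
            by_contra hne
            exact hx ⟨x - 1, by show x - 1 + 1 = x; omega⟩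
          subst hx0
          norm_num
      convert H2' using 2 with n
      simp only [Function.comp]
      push_cast
      ring
    have HZ : HasSum (fun j : ℤ => 1 / (j : ℝ) ^ 2) (Real.pi ^ 2 / 6 + Real.pi ^ 2 / 6) :=
      HasSum.of_nat_of_neg_add_one H1 H2
    rw [← ENNReal.ofReal_tsum_of_nonneg (fun j => by positivity) HZ.summable]
    apply ENNReal.ofReal_le_ofReal
    rw [HZ.tsum_eq]
    nlinarith [Real.pi_le_four, Real.pi_pos]
  -- put it together
  have hbsum : (∑' j : ℤ, b j) ≤ ENNReal.ofReal (96 * (M' ^ 2 + M ^ 2)) := by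
    calc (∑' j : ℤ, b j)
        ≤ ∑' j : ℤ, ((if |j| ≤ 1 then ENNReal.ofReal (M' ^ 2) else 0)
            + ENNReal.ofReal (16 * M ^ 2) * ENNReal.ofReal (1 / (j : ℝ) ^ 2)) :=
          ENNReal.tsum_le_tsum hBsplit
      _ = (∑' j : ℤ, (if |j| ≤ 1 then ENNReal.ofReal (M' ^ 2) else 0))
            + ENNReal.ofReal (16 * M ^ 2) * ∑' j : ℤ, ENNReal.ofReal (1 / (j : ℝ) ^ 2) := by
          rw [ENNReal.tsum_add, ENNReal.tsum_mul_left]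
      _ ≤ ENNReal.ofReal (3 * M' ^ 2) + ENNReal.ofReal (16 * M ^ 2) * ENNReal.ofReal 6 := by
          rw [hAsum]
          exact add_le_add le_rfl (mul_le_mul_right hzsum _)
      _ ≤ ENNReal.ofReal (96 * (M' ^ 2 + M ^ 2)) := by
          rw [← ENNReal.ofReal_mul (by positivity),
            ← ENNReal.ofReal_add (by positivity) (by positivity)]
          apply ENNReal.ofReal_le_ofReal
          nlinarith [sq_nonneg M', sq_nonneg M]
  refine iSup_le fun k => ?_
  calc (∑' l : ℤ, ⨆ x ∈ Set.Icc (k : ℝ) ((k : ℝ) + 1), ⨆ y ∈ Set.Icc (l : ℝ) ((l : ℝ) + 1),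
        ⨆ _ : x ≠ y, ENNReal.ofReal (‖f x - f y‖ ^ 2 / (x - y) ^ 2))
      ≤ ∑' l : ℤ, b (l - k) := ENNReal.tsum_le_tsum fun l => key k l
    _ = ∑' j : ℤ, b j := by
        simpa using (Equiv.subRight k).tsum_eq b
    _ ≤ ENNReal.ofReal (96 * (M' ^ 2 + M ^ 2)) := hbsum
end
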